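/- arXiv:2501.00605 — 9 statements merged into one kernel-verified Lean document; each statement's English description precedes it below -/
import Mathlib

section
/- Let N ≥ 1, T > 0, let a, b : ℝ → ℝ be continuous, and σ ∈ ℝ. Let x : [0,T] → ℝ^N be continuous with x_1(t), …, x_N(t) pairwise distinct for every t ∈ [0,T], and let β : [0,T] → ℝ^N be differentiable and satisfy, for every i and every t ∈ [0,T], the weight equation of the Gauss–Galerkin evolution equations: β̇_i = 2β_i a(x_i) l'_{ii} + σ²(β_i b(x_i)²((l'_{ii})² + l''_{ii}) + Σ_{j≠i} β_j b(x_j)² (l'_{ij})²), where the Lagrange quantities are evaluated at the nodes x_1(t), …, x_N(t). If β_i(0) > 0 for every i, then β_i(t) > 0 for every i and every t ∈ [0,T]. -/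
/-!
The weight equation is linear in `β`: `β̇_i = c_i(t) β_i + σ² ∑_{j≠i} b(x_j)² (l'_{ij})² β_j`,
with nonnegative off-diagonal coefficients and a diagonal coefficient `c_i` that is continuous
on `[0, T]` because the nodes stay distinct. As long as all weights are nonnegative,
`β̇_i ≥ -M β_i` with `M = max |c_i|`, so `β_i(t) e^{Mt}` is nondecreasing and
`β_i(t) ≥ β_i(0) e^{-Mt} > 0`; hence no weight can be the first to reach `0`.
-/

open Finset

/-- `l'_{ii} = ∑_{k≠i} 1/(x_i − x_k)`, the derivative of the `i`-th Lagrange basis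
polynomial at its own node. -/
noncomputable def lpDiag {N : ℕ} (x : Fin N → ℝ) (i : Fin N) : ℝ :=
  ∑ k ∈ Finset.univ.erase i, 1 / (x i - x k)

/-- `l'_{ij} = (∏_{k≠j}(x_j − x_k)) / ((x_j − x_i)·∏_{k≠i}(x_i − x_k))` for `j ≠ i`,
the derivative of the `i`-th Lagrange basis polynomial at the node `x_j`. -/
noncomputable def lpOff {N : ℕ} (x : Fin N → ℝ) (i j : Fin N) : ℝ :=
  (∏ k ∈ Finset.univ.erase j, (x j - x k)) /
    ((x j - x i) * ∏ k ∈ Finset.univ.erase i, (x i - x k))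

/-- `l''_{ii} = (∑_{k≠i} 1/(x_i − x_k))² − ∑_{k≠i} 1/(x_i − x_k)²`, the second derivative
of the `i`-th Lagrange basis polynomial at its own node. -/
noncomputable def lppDiag {N : ℕ} (x : Fin N → ℝ) (i : Fin N) : ℝ :=
  (∑ k ∈ Finset.univ.erase i, 1 / (x i - x k)) ^ 2 -
    ∑ k ∈ Finset.univ.erase i, 1 / (x i - x k) ^ 2

/-- Right-hand side of the Gauss–Galerkin node equation (the `x`-equation):
`β_i A_i + σ²(2 β_i b(x_i)² l'_{ii} + ∑_{j≠i} β_j b(x_j)² (x_j − x_i)(l'_{ij})²)`,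
where `A_i` is the drift value at node `i` (possibly configuration dependent). -/
noncomputable def ggDriftRHS {N : ℕ} (A : Fin N → ℝ) (b : ℝ → ℝ) (σ : ℝ)
    (x β : Fin N → ℝ) (i : Fin N) : ℝ :=
  β i * A i + σ ^ 2 * (2 * β i * (b (x i)) ^ 2 * lpDiag x i +
    ∑ j ∈ Finset.univ.erase i, β j * (b (x j)) ^ 2 * (x j - x i) * (lpOff x i j) ^ 2)

/-- Right-hand side of the Gauss–Galerkin weight equation (the `β`-equation):
`2 β_i A_i l'_{ii} + σ²(β_i b(x_i)²((l'_{ii})² + l''_{ii}) + ∑_{j≠i} β_j b(x_j)²(l'_{ij})²)`. -/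
noncomputable def ggWeightRHS {N : ℕ} (A : Fin N → ℝ) (b : ℝ → ℝ) (σ : ℝ)
    (x β : Fin N → ℝ) (i : Fin N) : ℝ :=
  2 * β i * A i * lpDiag x i +
    σ ^ 2 * (β i * (b (x i)) ^ 2 * ((lpDiag x i) ^ 2 + lppDiag x i) +
      ∑ j ∈ Finset.univ.erase i, β j * (b (x j)) ^ 2 * (lpOff x i j) ^ 2)

/-- The stationary Gauss–Galerkin equations with node-dependent drift values `A_i`. -/
def StationaryGGWithDrift {N : ℕ} (A : Fin N → ℝ) (b : ℝ → ℝ) (σ : ℝ)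
    (x β : Fin N → ℝ) : Prop :=
  ∀ i, 0 = ggDriftRHS A b σ x β i ∧ 0 = ggWeightRHS A b σ x β i

/-- The stationary Gauss–Galerkin equations with drift `a : ℝ → ℝ`,
diffusion `b : ℝ → ℝ` and parameter `σ`. -/
def StationaryGG {N : ℕ} (a b : ℝ → ℝ) (σ : ℝ) (x β : Fin N → ℝ) : Prop :=
  StationaryGGWithDrift (fun i => a (x i)) b σ x β


section FirstExit

variable {ι : Type*} [Finite ι] {g : ι → ℝ → ℝ} {a b : ℝ}

/-- First-exit argument: at the infimum of the times where some `g i` is nonpositive,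
all of them are still nonnegative. -/
theorem forall_pos_of_forall_nonneg_imp_pos (hg : ∀ i, ContinuousOn (g i) (Set.Icc a b))
    (hpos : ∀ i, 0 < g i a)
    (hstep : ∀ τ ∈ Set.Ioc a b, (∀ s ∈ Set.Icc a τ, ∀ j, 0 ≤ g j s) → ∀ i, 0 < g i τ) :
    ∀ t ∈ Set.Icc a b, ∀ i, 0 < g i t := by
  by_contra! ⟨t₀, ht₀, i₀, hi₀⟩
  set B : Set ℝ := ⋃ i, Set.Icc a b ∩ g i ⁻¹' Set.Iic 0
  have hBsub : B ⊆ Set.Icc a b := Set.iUnion_subset fun _ => Set.inter_subset_left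
  have hBbdd : BddBelow B := bddBelow_Icc.mono hBsub
  have hBclosed : IsClosed B := isClosed_iUnion_of_finite fun i =>
    (hg i).preimage_isClosed_of_isClosed isClosed_Icc isClosed_Iic
  have hτB : sInf B ∈ B := hBclosed.csInf_mem ⟨t₀, Set.mem_iUnion.2 ⟨i₀, ht₀, hi₀⟩⟩ hBbdd
  obtain ⟨i, hτ, hiτ⟩ := Set.mem_iUnion.1 hτB
  have hpos_before : ∀ s ∈ Set.Ico a (sInf B), ∀ j, 0 < g j s := fun s hs j => by
    by_contra! hle
    exact notMem_of_lt_csInf hs.2 hBbdd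
      (Set.mem_iUnion.2 ⟨j, ⟨hs.1, hs.2.le.trans hτ.2⟩, hle⟩)
  have haτ : a < sInf B := lt_of_le_of_ne hτ.1 fun h => (hpos i).not_ge (h ▸ hiτ)
  have hnonneg : ∀ s ∈ Set.Icc a (sInf B), ∀ j, 0 ≤ g j s := fun s hs j => by
    have hIcc : Set.Icc a (sInf B) ⊆ Set.Icc a b := Set.Icc_subset_Icc le_rfl hτ.2
    have hclosed : IsClosed (Set.Icc a (sInf B) ∩ g j ⁻¹' Set.Ici 0) :=
      ((hg j).mono hIcc).preimage_isClosed_of_isClosed isClosed_Icc isClosed_Ici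
    have hsub := hclosed.closure_subset_iff.2 fun u hu =>
      ⟨Set.Ico_subset_Icc_self hu, (hpos_before u hu j).le⟩
    rw [closure_Ico haτ.ne] at hsub
    exact (hsub hs).2
  exact hiτ.not_gt (hstep _ ⟨haτ, hτ.2⟩ hnonneg i)

end FirstExit

theorem monotoneOn_mul_exp_of_neg_mul_le_deriv {f f' : ℝ → ℝ} {a b M : ℝ}
    (hf : ContinuousOn f (Set.Icc a b)) (hderiv : ∀ t ∈ Set.Ioo a b, HasDerivAt f (f' t) t)
    (hle : ∀ t ∈ Set.Ioo a b, -(M * f t) ≤ f' t) :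
    MonotoneOn (fun t => f t * Real.exp (M * t)) (Set.Icc a b) := by
  refine monotoneOn_of_hasDerivWithinAt_nonneg (convex_Icc a b) (hf.mul (by fun_prop))
    (f' := fun t => (f' t + M * f t) * Real.exp (M * t)) (fun t ht => ?_) fun t ht => ?_
  all_goals rw [interior_Icc] at ht
  · exact ((hderiv t ht).mul (hasDerivAt_const_mul M).exp).hasDerivWithinAt.congr_deriv (by ring)
  · exact mul_nonneg (by linarith [hle t ht]) (Real.exp_pos _).le

section Nodes

variable {N : ℕ} {x : ℝ → Fin N → ℝ} {s : Set ℝ}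

theorem continuousOn_one_div_node_sub_pow (hx : ∀ i, ContinuousOn (fun t => x t i) s)
    (hdist : ∀ t ∈ s, ∀ i j : Fin N, i ≠ j → x t i ≠ x t j) {i k : Fin N} (hk : k ∈ univ.erase i)
    (n : ℕ) : ContinuousOn (fun t => 1 / (x t i - x t k) ^ n) s :=
  continuousOn_const.div (((hx i).sub (hx k)).pow n) fun t ht =>
    pow_ne_zero n (sub_ne_zero.2 (hdist t ht i k (ne_of_mem_erase hk).symm))

theorem continuousOn_lpDiag (hx : ∀ i, ContinuousOn (fun t => x t i) s)
    (hdist : ∀ t ∈ s, ∀ i j : Fin N, i ≠ j → x t i ≠ x t j) (i : Fin N) :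
    ContinuousOn (fun t => lpDiag (x t) i) s :=
  continuousOn_finsetSum _ fun _ hk => by
    simpa using continuousOn_one_div_node_sub_pow hx hdist hk 1

theorem continuousOn_lppDiag (hx : ∀ i, ContinuousOn (fun t => x t i) s)
    (hdist : ∀ t ∈ s, ∀ i j : Fin N, i ≠ j → x t i ≠ x t j) (i : Fin N) :
    ContinuousOn (fun t => lppDiag (x t) i) s :=
  ((continuousOn_lpDiag hx hdist i).pow 2).sub
    (continuousOn_finsetSum _ fun _ hk => continuousOn_one_div_node_sub_pow hx hdist hk 2)

end Nodes

noncomputable def ggWeightCoeff {N : ℕ} (A : Fin N → ℝ) (b : ℝ → ℝ) (σ : ℝ) (x : Fin N → ℝ)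
    (i : Fin N) : ℝ :=
  2 * A i * lpDiag x i + σ ^ 2 * b (x i) ^ 2 * (lpDiag x i ^ 2 + lppDiag x i)

section WeightEquation

variable {N : ℕ} (A : Fin N → ℝ) (b : ℝ → ℝ) (σ : ℝ) (x β : Fin N → ℝ) (i : Fin N)

theorem ggWeightRHS_eq : ggWeightRHS A b σ x β i = β i * ggWeightCoeff A b σ x i +
    σ ^ 2 * ∑ j ∈ univ.erase i, β j * b (x j) ^ 2 * lpOff x i j ^ 2 := by
  unfold ggWeightRHS ggWeightCoeff
  ring

variable {A b σ x β i}

theorem mul_ggWeightCoeff_le_ggWeightRHS (hβ : ∀ j ≠ i, 0 ≤ β j) :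
    β i * ggWeightCoeff A b σ x i ≤ ggWeightRHS A b σ x β i := by
  rw [ggWeightRHS_eq]
  refine le_add_of_nonneg_right (mul_nonneg (sq_nonneg σ) (sum_nonneg fun j hj => ?_))
  exact mul_nonneg (mul_nonneg (hβ j (ne_of_mem_erase hj)) (sq_nonneg _)) (sq_nonneg _)

end WeightEquation

theorem continuousOn_ggWeightCoeff {N : ℕ} {a b : ℝ → ℝ} (ha : Continuous a) (hb : Continuous b)
    (σ : ℝ) {x : ℝ → Fin N → ℝ} {s : Set ℝ} (hx : ∀ i, ContinuousOn (fun t => x t i) s)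
    (hdist : ∀ t ∈ s, ∀ i j : Fin N, i ≠ j → x t i ≠ x t j) (i : Fin N) :
    ContinuousOn (fun t => ggWeightCoeff (fun j => a (x t j)) b σ (x t) i) s := by
  have hL := continuousOn_lpDiag hx hdist i
  have hP := continuousOn_lppDiag hx hdist i
  have hai := ha.comp_continuousOn (hx i)
  have hbi := hb.comp_continuousOn (hx i)
  unfold ggWeightCoeff
  fun_prop

theorem gg_weights_stay_positive_general {N : ℕ} (T : ℝ)
    (a b : ℝ → ℝ) (ha : Continuous a) (hb : Continuous b) (σ : ℝ)
    (x β : ℝ → Fin N → ℝ)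
    (hxcont : ∀ i, ContinuousOn (fun t => x t i) (Set.Icc 0 T))
    (hdist : ∀ t ∈ Set.Icc (0 : ℝ) T, ∀ i j : Fin N, i ≠ j → x t i ≠ x t j)
    (hβeq : ∀ t ∈ Set.Icc (0 : ℝ) T, ∀ i,
      HasDerivAt (fun s => β s i)
        (ggWeightRHS (fun i => a (x t i)) b σ (x t) (β t) i) t)
    (hβ0 : ∀ i, 0 < β 0 i) :
    ∀ t ∈ Set.Icc (0 : ℝ) T, ∀ i, 0 < β t i := by
  have hβcont : ∀ i, ContinuousOn (fun t => β t i) (Set.Icc 0 T) := fun i t ht =>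
    (hβeq t ht i).continuousAt.continuousWithinAt
  refine forall_pos_of_forall_nonneg_imp_pos hβcont hβ0 fun τ hτ hnonneg i => ?_
  have hIcc : Set.Icc 0 τ ⊆ Set.Icc 0 T := Set.Icc_subset_Icc le_rfl hτ.2
  obtain ⟨M, hM⟩ := isCompact_Icc.exists_bound_of_continuousOn
    (continuousOn_ggWeightCoeff ha hb σ hxcont hdist i)
  have hmono := monotoneOn_mul_exp_of_neg_mul_le_deriv (M := M) ((hβcont i).mono hIcc)
    (fun t ht => hβeq t (hIcc (Set.Ioo_subset_Icc_self ht)) i) fun t ht => by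
      have ht' := Set.Ioo_subset_Icc_self ht
      have hC := abs_le.1 ((Real.norm_eq_abs _).symm.trans_le (hM t (hIcc ht')))
      have hβi := hnonneg t ht' i
      calc -(M * β t i) ≤ β t i * ggWeightCoeff (fun j => a (x t j)) b σ (x t) i := by nlinarith
        _ ≤ _ := mul_ggWeightCoeff_le_ggWeightRHS fun j _ => hnonneg t ht' j
  have h0τ := hmono (Set.left_mem_Icc.2 hτ.1.le) (Set.right_mem_Icc.2 hτ.1.le) hτ.1.le
  simp only [mul_zero, Real.exp_zero, mul_one] at h0τ
  exact pos_of_mul_pos_left ((hβ0 i).trans_le h0τ) (Real.exp_pos _).le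

/-- **Positivity of Gauss–Galerkin weights.**
If `(x, β)` solves the weight equation of the Gauss–Galerkin evolution equations on `[0, T]`
with continuous pairwise-distinct nodes and `β_i(0) > 0` for all `i`, then `β_i(t) > 0`
for all `i` and `t ∈ [0, T]`. -/
theorem gg_weights_stay_positive {N : ℕ} (hN : 1 ≤ N) (T : ℝ) (hT : 0 < T)
    (a b : ℝ → ℝ) (ha : Continuous a) (hb : Continuous b) (σ : ℝ)
    (x β : ℝ → Fin N → ℝ)
    (hxcont : ∀ i, ContinuousOn (fun t => x t i) (Set.Icc 0 T))
    (hdist : ∀ t ∈ Set.Icc (0 : ℝ) T, ∀ i j : Fin N, i ≠ j → x t i ≠ x t j)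
    (hβeq : ∀ t ∈ Set.Icc (0 : ℝ) T, ∀ i,
      HasDerivAt (fun s => β s i)
        (ggWeightRHS (fun i => a (x t i)) b σ (x t) (β t) i) t)
    (hβ0 : ∀ i, 0 < β 0 i) :
    ∀ t ∈ Set.Icc (0 : ℝ) T, ∀ i, 0 < β t i :=
  gg_weights_stay_positive_general T a b ha hb σ x β hxcont hdist hβeq hβ0
end

section
/- Let N ≥ 1, let a : ℝ → ℝ be odd, b : ℝ → ℝ be even, σ ∈ ℝ, and let r(i) = N + 1 − i be the index reversal. Suppose (x, β) : I → ℝ^N × ℝ^N is differentiable, has pairwise distinct nodes, and satisfies the Gauss–Galerkin evolution equations with drift a, diffusion b and parameter σ. Define x̃_i(t) = −x_{r(i)}(t) and β̃_i(t) = β_{r(i)}(t). Then (x̃, β̃) also satisfies the Gauss–Galerkin evolution equations with the same a, b, σ. (Hence the Gauss–Galerkin flow is equivariant under spatial reflection, so symmetric approximants remain symmetric.) -/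
/-!
The Gauss–Galerkin equations have two separate symmetries. Relabelling the nodes by any
permutation preserves them, because `l'` and `l''` at a node are symmetric functions of the
other nodes. Under `x ↦ -x`, `l'_{ii}` and `l'_{ij}` change sign while `l''_{ii}` does not, so when
`a` is odd and `b` is even the node equation changes sign on both sides and the weight equation
is unchanged. The reflection `x̃_i = -x_{r(i)}` combines the reversal permutation with `x ↦ -x`.
-/

open Finset

/-- `(x, β, x', β')` solves the Gauss–Galerkin evolution equations on the set `I`:
the nodes stay pairwise distinct, `x'` and `β'` are the derivatives of `x` and `β`,
and for every `i` and `t ∈ I`: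
`β_i ẋ_i = β_i a(x_i) + σ²(2β_i b(x_i)² l'_{ii} + ∑_{j≠i} β_j b(x_j)²(x_j − x_i)(l'_{ij})²)`
and
`β̇_i = 2β_i a(x_i) l'_{ii} + σ²(β_i b(x_i)²((l'_{ii})² + l''_{ii}) + ∑_{j≠i} β_j b(x_j)²(l'_{ij})²)`. -/
def SolvesGG {N : ℕ} (a b : ℝ → ℝ) (σ : ℝ) (I : Set ℝ)
    (x β x' β' : ℝ → Fin N → ℝ) : Prop :=
  ∀ t ∈ I, (∀ i j : Fin N, i ≠ j → x t i ≠ x t j) ∧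
    ∀ i, HasDerivAt (fun s => x s i) (x' t i) t ∧
      HasDerivAt (fun s => β s i) (β' t i) t ∧
      β t i * x' t i = ggDriftRHS (fun i => a (x t i)) b σ (x t) (β t) i ∧
      β' t i = ggWeightRHS (fun i => a (x t i)) b σ (x t) (β t) i


@[to_additive]
lemma Finset.prod_univ_erase_comp_perm {ι M : Type*} [Fintype ι] [DecidableEq ι] [CommMonoid M]
    (e : Equiv.Perm ι) (i : ι) (f : ι → M) :
    ∏ k ∈ univ.erase i, f (e k) = ∏ k ∈ univ.erase (e i), f k :=
  prod_equiv e (by simp) fun _ _ => rfl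

variable {N : ℕ}

section Relabel

variable (e : Equiv.Perm (Fin N))

lemma lpDiag_comp_perm (x : Fin N → ℝ) (i : Fin N) :
    lpDiag (fun k => x (e k)) i = lpDiag x (e i) :=
  sum_univ_erase_comp_perm e i fun k => 1 / (x (e i) - x k)

lemma lpOff_comp_perm (x : Fin N → ℝ) (i j : Fin N) :
    lpOff (fun k => x (e k)) i j = lpOff x (e i) (e j) := by
  unfold lpOff
  rw [prod_univ_erase_comp_perm e j fun k => x (e j) - x k,
    prod_univ_erase_comp_perm e i fun k => x (e i) - x k]

lemma lppDiag_comp_perm (x : Fin N → ℝ) (i : Fin N) :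
    lppDiag (fun k => x (e k)) i = lppDiag x (e i) := by
  unfold lppDiag
  rw [sum_univ_erase_comp_perm e i fun k => 1 / (x (e i) - x k),
    sum_univ_erase_comp_perm e i fun k => 1 / (x (e i) - x k) ^ 2]

lemma ggDriftRHS_comp_perm (A : Fin N → ℝ) (b : ℝ → ℝ) (σ : ℝ) (x β : Fin N → ℝ) (i : Fin N) :
    ggDriftRHS (fun k => A (e k)) b σ (fun k => x (e k)) (fun k => β (e k)) i
      = ggDriftRHS A b σ x β (e i) := by
  unfold ggDriftRHS
  simp only [lpDiag_comp_perm, lpOff_comp_perm]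
  rw [sum_univ_erase_comp_perm e i
    fun j => β j * b (x j) ^ 2 * (x j - x (e i)) * lpOff x (e i) j ^ 2]

lemma ggWeightRHS_comp_perm (A : Fin N → ℝ) (b : ℝ → ℝ) (σ : ℝ) (x β : Fin N → ℝ) (i : Fin N) :
    ggWeightRHS (fun k => A (e k)) b σ (fun k => x (e k)) (fun k => β (e k)) i
      = ggWeightRHS A b σ x β (e i) := by
  unfold ggWeightRHS
  simp only [lpDiag_comp_perm, lppDiag_comp_perm, lpOff_comp_perm]
  rw [sum_univ_erase_comp_perm e i fun j => β j * b (x j) ^ 2 * lpOff x (e i) j ^ 2]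

end Relabel

section Reflect

lemma lpDiag_neg (x : Fin N → ℝ) (i : Fin N) : lpDiag (-x) i = -lpDiag x i := by
  simp only [lpDiag, Pi.neg_apply, neg_sub_neg, ← neg_sub (x i), div_neg, sum_neg_distrib]

lemma lppDiag_neg (x : Fin N → ℝ) (i : Fin N) : lppDiag (-x) i = lppDiag x i := by
  simp only [lppDiag, Pi.neg_apply, neg_sub_neg, ← neg_sub (x i), div_neg, sum_neg_distrib,
    neg_sq]

lemma lpOff_neg (x : Fin N → ℝ) (i j : Fin N) : lpOff (-x) i j = -lpOff x i j := by
  have hprod (m : Fin N) : ∏ k ∈ univ.erase m, ((-x) m - (-x) k)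
      = (-1) ^ (N - 1) * ∏ k ∈ univ.erase m, (x m - x k) := by
    simp only [Pi.neg_apply, neg_sub_neg, ← neg_sub (x m), prod_neg,
      card_erase_of_mem (mem_univ _), card_univ, Fintype.card_fin]
  rw [lpOff, lpOff, hprod, hprod, Pi.neg_apply, Pi.neg_apply, neg_sub_neg, ← neg_sub, neg_mul,
    div_neg, mul_left_comm, mul_div_mul_left _ _ (pow_ne_zero _ (neg_ne_zero.2 one_ne_zero))]

lemma ggDriftRHS_neg {b : ℝ → ℝ} (hb : ∀ y, b (-y) = b y) (A : Fin N → ℝ) (σ : ℝ)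
    (x β : Fin N → ℝ) (i : Fin N) :
    ggDriftRHS (-A) b σ (-x) β i = -ggDriftRHS A b σ x β i := by
  simp only [ggDriftRHS, Pi.neg_apply, hb, lpDiag_neg, lpOff_neg, neg_sq, neg_sub_neg,
    ← neg_sub _ (x i), mul_neg, neg_mul, sum_neg_distrib]
  ring

lemma ggWeightRHS_neg {b : ℝ → ℝ} (hb : ∀ y, b (-y) = b y) (A : Fin N → ℝ) (σ : ℝ)
    (x β : Fin N → ℝ) (i : Fin N) :
    ggWeightRHS (-A) b σ (-x) β i = ggWeightRHS A b σ x β i := by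
  simp only [ggWeightRHS, Pi.neg_apply, hb, lpDiag_neg, lppDiag_neg, lpOff_neg, neg_sq]
  ring

end Reflect

namespace SolvesGG

variable {a b : ℝ → ℝ} {σ : ℝ} {I : Set ℝ} {x β x' β' : ℝ → Fin N → ℝ}

theorem comp_perm (h : SolvesGG a b σ I x β x' β') (e : Equiv.Perm (Fin N)) :
    SolvesGG a b σ I (fun t k => x t (e k)) (fun t k => β t (e k))
      (fun t k => x' t (e k)) (fun t k => β' t (e k)) := by
  intro t ht
  obtain ⟨hdistinct, hi⟩ := h t ht
  refine ⟨fun i j hij => hdistinct _ _ (e.injective.ne hij), fun i => ?_⟩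
  obtain ⟨hx, hβ, hdrift, hweight⟩ := hi (e i)
  exact ⟨hx, hβ, hdrift.trans (ggDriftRHS_comp_perm e _ b σ _ _ i).symm,
    hweight.trans (ggWeightRHS_comp_perm e _ b σ _ _ i).symm⟩

theorem neg (ha : ∀ y, a (-y) = -a y) (hb : ∀ y, b (-y) = b y)
    (h : SolvesGG a b σ I x β x' β') :
    SolvesGG a b σ I (fun t => -x t) β (fun t => -x' t) β' := by
  intro t ht
  obtain ⟨hdistinct, hi⟩ := h t ht
  have hA : (fun k => a ((-x t) k)) = -fun k => a (x t k) := funext fun k => ha (x t k)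
  refine ⟨fun i j hij => neg_injective.ne (hdistinct i j hij), fun i => ?_⟩
  obtain ⟨hx, hβ, hdrift, hweight⟩ := hi i
  refine ⟨hx.neg, hβ, ?_, ?_⟩
  · rw [hA, ggDriftRHS_neg hb, ← hdrift]
    exact mul_neg _ _
  · rw [hA, ggWeightRHS_neg hb, hweight]

end SolvesGG

theorem gg_reflection_equivariant_general {N : ℕ} (a b : ℝ → ℝ)
    (ha : ∀ y : ℝ, a (-y) = -a y) (hb : ∀ y : ℝ, b (-y) = b y) (σ : ℝ)
    (I : Set ℝ) (x β x' β' : ℝ → Fin N → ℝ)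
    (h : SolvesGG a b σ I x β x' β') :
    SolvesGG a b σ I
      (fun t i => -x t i.rev) (fun t i => β t i.rev)
      (fun t i => -x' t i.rev) (fun t i => β' t i.rev) :=
  (h.comp_perm Fin.revPerm).neg ha hb

/-- **Reflection equivariance (parity) of the Gauss–Galerkin flow.**
If the drift `a` is odd and the diffusion `b` is even, and `(x, β)` solves the
Gauss–Galerkin evolution equations, then the reflected configuration
`x̃_i(t) = −x_{r(i)}(t)`, `β̃_i(t) = β_{r(i)}(t)` (with `r` the index reversal
`i ↦ N + 1 − i`, i.e. `Fin.rev`) also solves them. Hence symmetric approximants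
remain symmetric. -/
theorem gg_reflection_equivariant {N : ℕ} (hN : 1 ≤ N) (a b : ℝ → ℝ)
    (ha : ∀ y : ℝ, a (-y) = -a y) (hb : ∀ y : ℝ, b (-y) = b y) (σ : ℝ)
    (I : Set ℝ) (x β x' β' : ℝ → Fin N → ℝ)
    (h : SolvesGG a b σ I x β x' β') :
    SolvesGG a b σ I
      (fun t i => -x t i.rev) (fun t i => β t i.rev)
      (fun t i => -x' t i.rev) (fun t i => β' t i.rev) :=
  gg_reflection_equivariant_general a b ha hb σ I x β x' β' h
end

section
/- For pairwise distinct real numbers x_1, …, x_N, the 2N polynomials l_i(X)² and (X − x_i)·l_i(X)², for i = 1, …, N, form a basis of the real vector space of polynomials of degree at most 2N − 1, where l_i is the i-th Lagrange basis polynomial associated to the nodes x_1, …, x_N. -/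
/-! The `2N` polynomials have degree `< 2N = dim`, so it suffices that they are linearly
independent. Evaluating a vanishing combination at a node `x_j` leaves only the coefficient
of `l_j²`. Differentiating and then evaluating at `x_j` leaves only the coefficient of
`(X - x_j) l_j²`: for `i ≠ j` both `l_i²` and `(X - x_i) l_i²` have a double root at `x_j`,
while the derivative of `(X - x_j) l_j²` at `x_j` is `l_j(x_j)² = 1`. -/

open Polynomial

namespace Lagrange

variable {F ι : Type*} [Field F] [Fintype ι] [DecidableEq ι] {v : ι → F}

theorem eval_basis_univ (hv : Function.Injective v) (i j : ι) :
    (Lagrange.basis Finset.univ v i).eval (v j) = if i = j then 1 else 0 := by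
  split_ifs with h
  · exact h ▸ eval_basis_self hv.injOn (Finset.mem_univ i)
  · exact eval_basis_of_ne h (Finset.mem_univ j)

theorem eval_derivative_X_sub_C_mul_basis_sq (hv : Function.Injective v) (i j : ι) :
    (derivative ((X - C (v i)) * Lagrange.basis Finset.univ v i ^ 2)).eval (v j) =
      if i = j then 1 else 0 := by
  simp only [derivative_mul, derivative_sub, derivative_X, derivative_C, derivative_pow,
    eval_add, eval_mul, eval_sub, eval_pow, eval_X, eval_C, eval_one,
    eval_basis_univ hv]
  split_ifs with h <;> simp [h]

theorem degree_X_sub_C_mul_basis_sq_lt (hv : Function.Injective v) (i : ι) :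
    ((X - C (v i)) * Lagrange.basis Finset.univ v i ^ 2).degree < ↑(2 * Fintype.card ι) := by
  have hne := pow_ne_zero 2 (basis_ne_zero hv.injOn (Finset.mem_univ i))
  have hcard : 0 < Fintype.card ι := Fintype.card_pos_iff.mpr ⟨i⟩
  rw [degree_eq_natDegree (mul_ne_zero (X_sub_C_ne_zero _) hne),
    natDegree_mul (X_sub_C_ne_zero _) hne, natDegree_X_sub_C, natDegree_pow,
    natDegree_basis hv.injOn (Finset.mem_univ i), Finset.card_univ]
  exact_mod_cast by omega

theorem degree_basis_sq_lt (hv : Function.Injective v) (i : ι) :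
    (Lagrange.basis Finset.univ v i ^ 2).degree < ↑(2 * Fintype.card ι) := by
  refine lt_of_le_of_lt ?_ (degree_X_sub_C_mul_basis_sq_lt hv i)
  rw [mul_comm]
  exact degree_le_mul_left _ (X_sub_C_ne_zero _)

variable (v) in
noncomputable def basisSqFamily : ι ⊕ ι → F[X] :=
  Sum.elim (fun i => Lagrange.basis Finset.univ v i ^ 2)
    (fun i => (X - C (v i)) * Lagrange.basis Finset.univ v i ^ 2)

theorem basisSqFamily_mem_degreeLT (hv : Function.Injective v) :
    ∀ s, basisSqFamily v s ∈ degreeLT F (2 * Fintype.card ι) := by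
  rintro (i | i) <;> rw [mem_degreeLT]
  exacts [degree_basis_sq_lt hv i, degree_X_sub_C_mul_basis_sq_lt hv i]

theorem linearIndependent_basisSqFamily (hv : Function.Injective v) :
    LinearIndependent F (basisSqFamily v) := by
  rw [Fintype.linearIndependent_iff]
  intro g hg
  rw [Fintype.sum_sum_type] at hg
  have h_inl : ∀ j, g (Sum.inl j) = 0 := by
    intro j
    simpa [basisSqFamily, eval_finsetSum, eval_basis_univ hv] using congrArg (eval (v j)) hg
  have h_inr : ∀ j, g (Sum.inr j) = 0 := by
    intro j
    have hg' : ∑ i, g (Sum.inr i) • ((X - C (v i)) * Lagrange.basis Finset.univ v i ^ 2) = 0 := by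
      simpa [basisSqFamily, h_inl] using hg
    simpa only [derivative_sum, derivative_smul, eval_finsetSum, eval_smul, smul_eq_mul,
      eval_derivative_X_sub_C_mul_basis_sq hv, mul_ite, mul_one, mul_zero,
      Finset.sum_ite_eq', Finset.mem_univ, if_true, derivative_zero, eval_zero] using
      congrArg (fun p => (derivative p).eval (v j)) hg'
  rintro (j | j)
  exacts [h_inl j, h_inr j]

end Lagrange

theorem lagrange_squares_basis_general {N : ℕ} (x : Fin N → ℝ)
    (hx : Function.Injective x) :
    ∃ B : Module.Basis (Fin N ⊕ Fin N) ℝ (Polynomial.degreeLT ℝ (2 * N)),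
      (∀ i : Fin N, (B (Sum.inl i) : Polynomial ℝ) =
        (Lagrange.basis Finset.univ x i) ^ 2) ∧
      (∀ i : Fin N, (B (Sum.inr i) : Polynomial ℝ) =
        (X - C (x i)) * (Lagrange.basis Finset.univ x i) ^ 2) := by
  have hmem := Lagrange.basisSqFamily_mem_degreeLT hx
  simp only [Fintype.card_fin] at hmem
  have hli : LinearIndependent ℝ fun s => (⟨_, hmem s⟩ : degreeLT ℝ (2 * N)) :=
    .of_comp (degreeLT ℝ (2 * N)).subtype (Lagrange.linearIndependent_basisSqFamily hx)
  have hcard : Fintype.card (Fin N ⊕ Fin N) = Module.finrank ℝ (degreeLT ℝ (2 * N)) := by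
    rw [Module.finrank_eq_card_basis (degreeLT.basis ℝ (2 * N))]
    simp [two_mul]
  refine ⟨basisOfLinearIndependentOfCardEqFinrank' _ hli hcard, fun i => ?_, fun i => ?_⟩ <;>
    simp [basisOfLinearIndependentOfCardEqFinrank', Lagrange.basisSqFamily]

/-- **The GG-QMoM test-function basis.**
For pairwise distinct nodes `x_1, …, x_N`, the `2N` polynomials `l_i(X)²` and
`(X − x_i)·l_i(X)²`, `i = 1, …, N`, form a basis of the space of real polynomials of
degree at most `2N − 1` (i.e. of `degreeLT ℝ (2N)`), where `l_i` is the `i`-th Lagrange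
basis polynomial associated to the nodes. -/
theorem lagrange_squares_basis {N : ℕ} (hN : 1 ≤ N) (x : Fin N → ℝ)
    (hx : Function.Injective x) :
    ∃ B : Module.Basis (Fin N ⊕ Fin N) ℝ (Polynomial.degreeLT ℝ (2 * N)),
      (∀ i : Fin N, (B (Sum.inl i) : Polynomial ℝ) =
        (Lagrange.basis Finset.univ x i) ^ 2) ∧
      (∀ i : Fin N, (B (Sum.inr i) : Polynomial ℝ) =
        (X - C (x i)) * (Lagrange.basis Finset.univ x i) ^ 2) :=
  lagrange_squares_basis_general x hx
end

section
/- Let N ≥ 1, let a, b : ℝ → ℝ be functions, σ ∈ ℝ, let x_1 < … < x_N be real numbers and β ∈ ℝ^N. Then (x, β) satisfies the stationary Gauss–Galerkin equations with drift a, diffusion b and parameter σ if and only if Σ_{k=1}^N β_k [ a(x_k) φ'(x_k) + (σ²/2) b(x_k)² φ''(x_k) ] = 0 for every real polynomial φ of degree at most 2N − 1 (i.e. the N-point measure Σ_k β_k δ_{x_k} annihilates the generator applied to every polynomial of degree at most 2N − 1). -/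
open Finset

open Polynomial

/-!
Let `ℓᵢ` be the Lagrange basis polynomials of the nodes and `Kᵢ = (X - xᵢ) ℓᵢ²`. The quantities
`l'ᵢᵢ`, `l'ᵢⱼ`, `l''ᵢᵢ` are `ℓᵢ'(xᵢ)`, `ℓᵢ'(xⱼ)`, `ℓᵢ''(xᵢ)`, and in these terms the node equation
at `i` says that the generator paired with `Kᵢ` vanishes, and the weight equation that it vanishes
on `ℓᵢ²`. By Hermite interpolation (a polynomial of degree `< 2N` with a double root at each node
is zero), the `2N` polynomials `ℓᵢ²`, `Kᵢ` span the polynomials of degree `< 2N`.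
-/

namespace Polynomial

section Derivatives

variable {R : Type*} [CommRing R] {ι : Type*} [DecidableEq ι] {s : Finset ι} {f : ι → R[X]}
  {a : R}

theorem eval_derivative_prod_of_eval_eq_one (hf : ∀ k ∈ s, (f k).eval a = 1) :
    (derivative (∏ k ∈ s, f k)).eval a = ∑ k ∈ s, (derivative (f k)).eval a := by
  induction s using Finset.induction_on with
  | empty => simp
  | insert j s hj ih =>
    have hfs : ∀ k ∈ s, (f k).eval a = 1 := fun k hk => hf k (mem_insert_of_mem hk)
    rw [prod_insert hj, sum_insert hj, derivative_mul, eval_add, eval_mul, eval_mul, eval_prod,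
      prod_eq_one hfs, hf j (mem_insert_self j s), ih hfs, mul_one, one_mul]

theorem eval_derivative_derivative_prod_of_eval_eq_one (hf : ∀ k ∈ s, (f k).eval a = 1) :
    (derivative (derivative (∏ k ∈ s, f k))).eval a =
      (∑ k ∈ s, (derivative (f k)).eval a) ^ 2 - ∑ k ∈ s, (derivative (f k)).eval a ^ 2 +
        ∑ k ∈ s, (derivative (derivative (f k))).eval a := by
  induction s using Finset.induction_on with
  | empty => simp
  | insert j s hj ih =>
    have hfs : ∀ k ∈ s, (f k).eval a = 1 := fun k hk => hf k (mem_insert_of_mem hk)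
    simp only [prod_insert hj, sum_insert hj, derivative_mul, derivative_add, eval_add, eval_mul]
    rw [eval_prod, prod_eq_one hfs, hf j (mem_insert_self j s),
      eval_derivative_prod_of_eval_eq_one hfs, ih hfs]
    ring

theorem eval_derivative_prod_of_eval_eq_zero {j : ι} (hj : j ∈ s) (hfj : (f j).eval a = 0) :
    (derivative (∏ k ∈ s, f k)).eval a =
      (derivative (f j)).eval a * ∏ k ∈ s.erase j, (f k).eval a := by
  rw [← mul_prod_erase s f hj, derivative_mul, eval_add, eval_mul, eval_mul, hfj, zero_mul,
    add_zero, eval_prod]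

theorem eval_derivative_sq (p : R[X]) (a : R) :
    (derivative (p ^ 2)).eval a = 2 * p.eval a * (derivative p).eval a := by
  simp [derivative_sq]

theorem eval_derivative_derivative_sq (p : R[X]) (a : R) :
    (derivative (derivative (p ^ 2))).eval a =
      2 * ((derivative p).eval a ^ 2 + p.eval a * (derivative (derivative p)).eval a) := by
  simp only [derivative_sq, derivative_mul, derivative_C, eval_add, eval_mul, eval_C, eval_zero]
  ring

theorem eval_derivative_X_sub_C_mul (b : R) (q : R[X]) (a : R) :
    (derivative ((X - C b) * q)).eval a = q.eval a + (a - b) * (derivative q).eval a := by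
  simp

theorem eval_derivative_derivative_X_sub_C_mul (b : R) (q : R[X]) (a : R) :
    (derivative (derivative ((X - C b) * q))).eval a =
      2 * (derivative q).eval a + (a - b) * (derivative (derivative q)).eval a := by
  simp only [derivative_mul, derivative_sub, derivative_X, derivative_C, sub_zero, derivative_add,
    one_mul, eval_add, eval_mul, eval_sub, eval_X, eval_C]
  ring

end Derivatives

theorem eq_zero_of_degree_lt_of_eval_and_derivative_index_eq_zero {F ι : Type*} [Field F]
    {s : Finset ι} {v : ι → F} {p : F[X]} (hvs : Set.InjOn v s) (hp : p.degree < ↑(2 * #s))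
    (eval_p : ∀ i ∈ s, p.eval (v i) = 0)
    (eval_derivative_p : ∀ i ∈ s, (derivative p).eval (v i) = 0) :
    p = 0 := by
  by_contra hp0
  have hsq_dvd : ∀ i ∈ s, (X - C (v i)) ^ 2 ∣ p := fun i hi =>
    (le_rootMultiplicity_iff hp0).1 <|
      (one_lt_rootMultiplicity_iff_isRoot hp0).2 ⟨eval_p i hi, eval_derivative_p i hi⟩
  have hcoprime : (s : Set ι).Pairwise (Function.onFun IsCoprime fun i => (X - C (v i)) ^ 2) :=
    fun i hi j hj hij => (isCoprime_X_sub_C_of_isUnit_sub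
      (sub_ne_zero.2 fun h => hij (hvs hi hj h)).isUnit).pow
  have hdeg := natDegree_le_of_dvd (prod_dvd_of_coprime hcoprime hsq_dvd) hp0
  rw [natDegree_prod _ _ fun i _ => pow_ne_zero 2 (X_sub_C_ne_zero (v i))] at hdeg
  simp only [natDegree_pow, natDegree_X_sub_C, sum_const, smul_eq_mul, mul_one, mul_comm #s] at hdeg
  exact (natDegree_lt_iff_degree_lt hp0 |>.2 hp).not_ge hdeg

end Polynomial

namespace Lagrange

variable {F : Type*} [Field F] {ι : Type*} [DecidableEq ι] {s : Finset ι} {v : ι → F}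
  {i j : ι}

theorem derivative_basisDivisor (x y : F) : derivative (basisDivisor x y) = C (x - y)⁻¹ := by
  simp [basisDivisor]

theorem eval_basisDivisor_self_of_mem_erase (hvs : Set.InjOn v s) (hi : i ∈ s) {k : ι}
    (hk : k ∈ s.erase i) : (basisDivisor (v i) (v k)).eval (v i) = 1 :=
  eval_basisDivisor_left_of_ne fun h => ne_of_mem_erase hk (hvs (mem_of_mem_erase hk) hi h.symm)

theorem eval_derivative_basis_self (hvs : Set.InjOn v s) (hi : i ∈ s) :
    (derivative (Lagrange.basis s v i)).eval (v i) = ∑ k ∈ s.erase i, (v i - v k)⁻¹ := by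
  rw [Lagrange.basis,
    eval_derivative_prod_of_eval_eq_one fun k => eval_basisDivisor_self_of_mem_erase hvs hi]
  simp [derivative_basisDivisor]

theorem eval_derivative_derivative_basis_self (hvs : Set.InjOn v s) (hi : i ∈ s) :
    (derivative (derivative (Lagrange.basis s v i))).eval (v i) =
      (∑ k ∈ s.erase i, (v i - v k)⁻¹) ^ 2 - ∑ k ∈ s.erase i, (v i - v k)⁻¹ ^ 2 := by
  rw [Lagrange.basis, eval_derivative_derivative_prod_of_eval_eq_one fun k =>
    eval_basisDivisor_self_of_mem_erase hvs hi]
  simp [derivative_basisDivisor]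

theorem eval_derivative_basis_of_ne (hij : i ≠ j) (hj : j ∈ s) :
    (derivative (Lagrange.basis s v i)).eval (v j) =
      (v i - v j)⁻¹ * ∏ k ∈ (s.erase i).erase j, (v i - v k)⁻¹ * (v j - v k) := by
  rw [Lagrange.basis, eval_derivative_prod_of_eval_eq_zero (mem_erase.2 ⟨hij.symm, hj⟩)
    (eval_basisDivisor_right (x := v i)), derivative_basisDivisor, eval_C]
  simp [basisDivisor]

theorem eval_derivative_basis_sq_self (hvs : Set.InjOn v s) (hi : i ∈ s) :
    (derivative (Lagrange.basis s v i ^ 2)).eval (v i) =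
      2 * (derivative (Lagrange.basis s v i)).eval (v i) := by
  rw [eval_derivative_sq, eval_basis_self hvs hi, mul_one]

theorem eval_derivative_basis_sq_of_ne (hij : i ≠ j) (hj : j ∈ s) :
    (derivative (Lagrange.basis s v i ^ 2)).eval (v j) = 0 := by
  rw [eval_derivative_sq, eval_basis_of_ne hij hj, mul_zero, zero_mul]

theorem eval_derivative_derivative_basis_sq_self (hvs : Set.InjOn v s) (hi : i ∈ s) :
    (derivative (derivative (Lagrange.basis s v i ^ 2))).eval (v i) =
      2 * ((derivative (Lagrange.basis s v i)).eval (v i) ^ 2 +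
        (derivative (derivative (Lagrange.basis s v i))).eval (v i)) := by
  rw [eval_derivative_derivative_sq, eval_basis_self hvs hi, one_mul]

theorem eval_derivative_derivative_basis_sq_of_ne (hij : i ≠ j) (hj : j ∈ s) :
    (derivative (derivative (Lagrange.basis s v i ^ 2))).eval (v j) =
      2 * (derivative (Lagrange.basis s v i)).eval (v j) ^ 2 := by
  rw [eval_derivative_derivative_sq, eval_basis_of_ne hij hj, zero_mul, add_zero]

theorem natDegree_basis_sq (hvs : Set.InjOn v s) (hi : i ∈ s) :
    (Lagrange.basis s v i ^ 2).natDegree = 2 * (#s - 1) := by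
  rw [natDegree_pow, natDegree_basis hvs hi]

noncomputable def hermiteDerivBasis (s : Finset ι) (v : ι → F) (i : ι) : F[X] :=
  (X - C (v i)) * Lagrange.basis s v i ^ 2

theorem eval_hermiteDerivBasis (hj : j ∈ s) : (hermiteDerivBasis s v i).eval (v j) = 0 := by
  rcases eq_or_ne i j with rfl | hij
  · simp [hermiteDerivBasis]
  · simp [hermiteDerivBasis, eval_basis_of_ne hij hj]

theorem eval_derivative_hermiteDerivBasis_self (hvs : Set.InjOn v s) (hi : i ∈ s) :
    (derivative (hermiteDerivBasis s v i)).eval (v i) = 1 := by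
  rw [hermiteDerivBasis, eval_derivative_X_sub_C_mul, eval_pow, eval_basis_self hvs hi]
  ring

theorem eval_derivative_hermiteDerivBasis_of_ne (hij : i ≠ j) (hj : j ∈ s) :
    (derivative (hermiteDerivBasis s v i)).eval (v j) = 0 := by
  rw [hermiteDerivBasis, eval_derivative_X_sub_C_mul, eval_derivative_basis_sq_of_ne hij hj,
    eval_pow, eval_basis_of_ne hij hj]
  ring

theorem eval_derivative_derivative_hermiteDerivBasis_self (hvs : Set.InjOn v s) (hi : i ∈ s) :
    (derivative (derivative (hermiteDerivBasis s v i))).eval (v i) =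
      4 * (derivative (Lagrange.basis s v i)).eval (v i) := by
  rw [hermiteDerivBasis, eval_derivative_derivative_X_sub_C_mul,
    eval_derivative_basis_sq_self hvs hi]
  ring

theorem eval_derivative_derivative_hermiteDerivBasis_of_ne (hij : i ≠ j) (hj : j ∈ s) :
    (derivative (derivative (hermiteDerivBasis s v i))).eval (v j) =
      2 * (v j - v i) * (derivative (Lagrange.basis s v i)).eval (v j) ^ 2 := by
  rw [hermiteDerivBasis, eval_derivative_derivative_X_sub_C_mul,
    eval_derivative_basis_sq_of_ne hij hj, eval_derivative_derivative_basis_sq_of_ne hij hj]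
  ring

theorem natDegree_hermiteDerivBasis_le (hvs : Set.InjOn v s) (hi : i ∈ s) :
    (hermiteDerivBasis s v i).natDegree ≤ 2 * #s - 1 := by
  have hs : 0 < #s := card_pos.2 ⟨i, hi⟩
  have := natDegree_mul_le (p := X - C (v i)) (q := Lagrange.basis s v i ^ 2)
  rw [natDegree_X_sub_C, natDegree_basis_sq hvs hi] at this
  rw [hermiteDerivBasis]
  omega

theorem eq_sum_hermite (hvs : Set.InjOn v s) {p : F[X]} (hp : p.degree < ↑(2 * #s)) :
    p = ∑ i ∈ s, (p.eval (v i) • Lagrange.basis s v i ^ 2 +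
      ((derivative p).eval (v i) -
        2 * p.eval (v i) * (derivative (Lagrange.basis s v i)).eval (v i)) •
          hermiteDerivBasis s v i) := by
  rw [← sub_eq_zero]
  have hs : ∀ i ∈ s, 0 < #s := fun i hi => card_pos.2 ⟨i, hi⟩
  have hmem : ∀ {q : F[X]}, q.natDegree < 2 * #s → q ∈ degreeLT F (2 * #s) := fun hq =>
    mem_degreeLT.2 ((degree_le_natDegree).trans_lt (by exact_mod_cast hq))
  refine eq_zero_of_degree_lt_of_eval_and_derivative_index_eq_zero hvs ?_ ?_ ?_
  · rw [← mem_degreeLT] at hp ⊢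
    refine sub_mem hp (sum_mem fun i hi => add_mem (Submodule.smul_mem _ _ (hmem ?_))
      (Submodule.smul_mem _ _ (hmem ?_)))
    · have := hs i hi
      rw [natDegree_basis_sq hvs hi]
      omega
    · have := hs i hi
      have := natDegree_hermiteDerivBasis_le hvs hi
      omega
  · intro j hj
    simp only [eval_sub, eval_finsetSum, eval_add, eval_smul, smul_eq_mul, eval_pow,
      eval_hermiteDerivBasis hj, mul_zero, add_zero]
    rw [sum_eq_single_of_mem j hj fun i _ hij => by rw [eval_basis_of_ne hij hj]; ring,
      eval_basis_self hvs hj]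
    ring
  · intro j hj
    simp only [derivative_sub, derivative_sum, derivative_add, derivative_smul, eval_sub,
      eval_finsetSum, eval_add, eval_smul, smul_eq_mul]
    rw [sum_eq_single_of_mem j hj fun i _ hij => by
        rw [eval_derivative_basis_sq_of_ne hij hj, eval_derivative_hermiteDerivBasis_of_ne hij hj]
        ring,
      eval_derivative_basis_sq_self hvs hj, eval_derivative_hermiteDerivBasis_self hvs hj]
    ring

theorem map_eq_zero_of_degree_lt {M : Type*} [AddCommGroup M] [Module F M] (L : F[X] →ₗ[F] M)
    (hvs : Set.InjOn v s) (hbasis : ∀ i ∈ s, L (Lagrange.basis s v i ^ 2) = 0)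
    (hderiv : ∀ i ∈ s, L (hermiteDerivBasis s v i) = 0) {p : F[X]}
    (hp : p.degree < ↑(2 * #s)) : L p = 0 := by
  rw [eq_sum_hermite hvs hp, map_sum]
  exact sum_eq_zero fun i hi => by
    rw [map_add, map_smul, map_smul, hbasis i hi, hderiv i hi, smul_zero, smul_zero, add_zero]

end Lagrange

/-- `φ ↦ ∑ₖ βₖ (Aₖ φ'(xₖ) + Bₖ φ''(xₖ))`: the measure `∑ₖ βₖ δ_{xₖ}` applied to the
generator `A ∂ + B ∂²`, whose coefficients enter only through their values at the nodes. -/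
noncomputable def generatorPairing {R ι : Type*} [CommRing R] [Fintype ι] (x β A B : ι → R) :
    R[X] →ₗ[R] R where
  toFun φ := ∑ k, β k * (A k * (derivative φ).eval (x k) +
    B k * (derivative (derivative φ)).eval (x k))
  map_add' p q := by
    simp only [map_add, eval_add, ← sum_add_distrib]
    exact sum_congr rfl fun _ _ => by ring
  map_smul' c p := by
    simp only [map_smul, eval_smul, smul_eq_mul, RingHom.id_apply, mul_sum]
    exact sum_congr rfl fun _ _ => by ring

theorem generatorPairing_apply {R ι : Type*} [CommRing R] [Fintype ι] (x β A B : ι → R)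
    (φ : R[X]) : generatorPairing x β A B φ = ∑ k, β k * (A k * (derivative φ).eval (x k) +
      B k * (derivative (derivative φ)).eval (x k)) :=
  rfl

section Nodes

open Lagrange

variable {N : ℕ} {x : Fin N → ℝ} (hx : Function.Injective x)
include hx

theorem lpDiag_eq_eval_derivative_basis (i : Fin N) :
    lpDiag x i = (derivative (Lagrange.basis univ x i)).eval (x i) := by
  simp only [eval_derivative_basis_self hx.injOn (mem_univ i), lpDiag, one_div]

theorem lppDiag_eq_eval_derivative_derivative_basis (i : Fin N) :
    lppDiag x i = (derivative (derivative (Lagrange.basis univ x i))).eval (x i) := by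
  simp only [eval_derivative_derivative_basis_self hx.injOn (mem_univ i), lppDiag, one_div, inv_pow]

theorem lpOff_eq_eval_derivative_basis {i j : Fin N} (hij : i ≠ j) :
    lpOff x i j = (derivative (Lagrange.basis univ x i)).eval (x j) := by
  have hsub : ∀ {k l : Fin N}, k ≠ l → x k - x l ≠ 0 := fun hkl => sub_ne_zero.2 (hx.ne hkl)
  rw [eval_derivative_basis_of_ne hij (mem_univ j), lpOff,
    ← mul_prod_erase (univ.erase j) _ (mem_erase.2 ⟨hij, mem_univ i⟩),
    ← mul_prod_erase (univ.erase i) _ (mem_erase.2 ⟨hij.symm, mem_univ j⟩), erase_right_comm,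
    prod_mul_distrib, prod_inv_distrib]
  have hprod : ∏ k ∈ (univ.erase i).erase j, (x i - x k) ≠ 0 :=
    prod_ne_zero_iff.2 fun k hk => hsub (ne_of_mem_erase (mem_of_mem_erase hk)).symm
  field_simp [hsub hij, hsub hij.symm, hprod]

variable (A : Fin N → ℝ) (b : ℝ → ℝ) (σ : ℝ) (β : Fin N → ℝ) (i : Fin N)

theorem generatorPairing_hermiteDerivBasis :
    generatorPairing x β A (fun k => σ ^ 2 / 2 * b (x k) ^ 2) (hermiteDerivBasis univ x i) =
      ggDriftRHS A b σ x β i := by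
  have hoff : ∀ j ∈ univ.erase i,
      β j * (A j * (derivative (hermiteDerivBasis univ x i)).eval (x j) +
        σ ^ 2 / 2 * b (x j) ^ 2 *
          (derivative (derivative (hermiteDerivBasis univ x i))).eval (x j)) =
      σ ^ 2 * (β j * b (x j) ^ 2 * (x j - x i) * lpOff x i j ^ 2) := fun j hj => by
    have hij := (ne_of_mem_erase hj).symm
    rw [eval_derivative_hermiteDerivBasis_of_ne hij (mem_univ j),
      eval_derivative_derivative_hermiteDerivBasis_of_ne hij (mem_univ j),
      ← lpOff_eq_eval_derivative_basis hx hij]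
    ring
  rw [generatorPairing_apply, ← add_sum_erase _ _ (mem_univ i), sum_congr rfl hoff, ← mul_sum,
    eval_derivative_hermiteDerivBasis_self hx.injOn (mem_univ i),
    eval_derivative_derivative_hermiteDerivBasis_self hx.injOn (mem_univ i),
    ← lpDiag_eq_eval_derivative_basis hx, ggDriftRHS]
  ring

theorem generatorPairing_basis_sq :
    generatorPairing x β A (fun k => σ ^ 2 / 2 * b (x k) ^ 2) (Lagrange.basis univ x i ^ 2) =
      ggWeightRHS A b σ x β i := by
  have hoff : ∀ j ∈ univ.erase i,
      β j * (A j * (derivative (Lagrange.basis univ x i ^ 2)).eval (x j) +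
        σ ^ 2 / 2 * b (x j) ^ 2 *
          (derivative (derivative (Lagrange.basis univ x i ^ 2))).eval (x j)) =
      σ ^ 2 * (β j * b (x j) ^ 2 * lpOff x i j ^ 2) := fun j hj => by
    have hij := (ne_of_mem_erase hj).symm
    rw [eval_derivative_basis_sq_of_ne hij (mem_univ j),
      eval_derivative_derivative_basis_sq_of_ne hij (mem_univ j),
      ← lpOff_eq_eval_derivative_basis hx hij]
    ring
  rw [generatorPairing_apply, ← add_sum_erase _ _ (mem_univ i), sum_congr rfl hoff, ← mul_sum,
    eval_derivative_basis_sq_self hx.injOn (mem_univ i),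
    eval_derivative_derivative_basis_sq_self hx.injOn (mem_univ i),
    ← lpDiag_eq_eval_derivative_basis hx, ← lppDiag_eq_eval_derivative_derivative_basis hx,
    ggWeightRHS]
  ring

end Nodes

/-- **Quadrature characterisation of the stationary Gauss–Galerkin equations.**
For ordered nodes `x_1 < … < x_N` and weights `β`, the pair `(x, β)` satisfies the
stationary Gauss–Galerkin equations with drift `a`, diffusion `b` and parameter `σ`
iff the `N`-point measure `∑_k β_k δ_{x_k}` annihilates the generator
`φ ↦ a φ' + (σ²/2) b² φ''` applied to every polynomial of degree at most `2N − 1`. -/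
theorem stationaryGG_iff_annihilates_generator {N : ℕ} (hN : 1 ≤ N)
    (a b : ℝ → ℝ) (σ : ℝ) (x β : Fin N → ℝ) (hx : StrictMono x) :
    StationaryGG a b σ x β ↔
      ∀ φ : Polynomial ℝ, φ.natDegree ≤ 2 * N - 1 →
        ∑ k, β k * (a (x k) * (derivative φ).eval (x k) +
          σ ^ 2 / 2 * (b (x k)) ^ 2 * (derivative (derivative φ)).eval (x k)) = 0 := by
  have hinj : Set.InjOn x (univ : Finset (Fin N)) := hx.injective.injOn
  have hcard : #(univ : Finset (Fin N)) = N := card_fin N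
  set L := generatorPairing x β (fun k => a (x k)) (fun k => σ ^ 2 / 2 * b (x k) ^ 2)
  have hnodes : StationaryGG a b σ x β ↔
      ∀ i, L (Lagrange.hermiteDerivBasis univ x i) = 0 ∧
        L (Lagrange.basis univ x i ^ 2) = 0 := by
    simp only [StationaryGG, StationaryGGWithDrift, L,
      generatorPairing_hermiteDerivBasis hx.injective, generatorPairing_basis_sq hx.injective,
      eq_comm]
  rw [hnodes]
  constructor
  · intro h φ hφ
    refine Lagrange.map_eq_zero_of_degree_lt L hinj (fun i _ => (h i).2) (fun i _ => (h i).1) ?_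
    rw [hcard]
    exact degree_le_natDegree.trans_lt (by exact_mod_cast (by omega : φ.natDegree < 2 * N))
  · intro h i
    have hK := Lagrange.natDegree_hermiteDerivBasis_le hinj (mem_univ i)
    have hsq := Lagrange.natDegree_basis_sq hinj (mem_univ i)
    rw [hcard] at hK hsq
    exact ⟨h _ hK, h _ (by omega)⟩
end

section
/- Let k > 0, let n ≥ 1 be an integer, σ > 0, N ≥ 1, and let the drift be a(y) = −k y^{2n−1}. If (x, β) ∈ ℝ^N × ℝ^N with pairwise distinct nodes satisfies the stationary Gauss–Galerkin equations with drift a, diffusion b ≡ 1 and parameter 1, then (σ^{1/n} x, β) satisfies the stationary Gauss–Galerkin equations with drift a, diffusion b ≡ 1 and parameter σ. -/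
open Finset

/-! Under the dilation `x ↦ c x` of the nodes, every Lagrange derivative `l'` scales by `c⁻¹` and
`l''` by `c⁻²`, so with constant diffusion the bracket multiplying `σ²` scales by `c⁻¹` in the node
equation and by `c⁻²` in the weight equation. For the odd monomial drift the drift terms scale by
`c^{2n-1}` and `c^{2n-2}`, so each equation is multiplied by a single power of `c` exactly when
`σ² = c^{2n}`, i.e. `c = σ^{1/n}`. -/

section Scaling

variable {N : ℕ} (x : Fin N → ℝ) (i : Fin N)

theorem lpDiag_scale (c : ℝ) : lpDiag (fun j => c * x j) i = c⁻¹ * lpDiag x i := by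
  simp only [lpDiag, Finset.mul_sum, ← mul_sub, one_div, mul_inv]

theorem lppDiag_scale (c : ℝ) :
    lppDiag (fun j => c * x j) i = c⁻¹ ^ 2 * lppDiag x i := by
  have hsq : ∑ k ∈ univ.erase i, 1 / (c * x i - c * x k) ^ 2
      = c⁻¹ ^ 2 * ∑ k ∈ univ.erase i, 1 / (x i - x k) ^ 2 := by
    simp only [Finset.mul_sum, ← mul_sub, mul_pow, one_div, mul_inv, inv_pow]
  have hlin := lpDiag_scale x i c
  unfold lpDiag at hlin
  rw [lppDiag, lppDiag, hsq, hlin]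
  ring

theorem prod_erase_sub_scale (c : ℝ) (m : Fin N) :
    ∏ k ∈ univ.erase m, (c * x m - c * x k) = c ^ (N - 1) * ∏ k ∈ univ.erase m, (x m - x k) := by
  simp_rw [← mul_sub]
  rw [prod_mul_distrib, prod_const, card_erase_of_mem (mem_univ m), card_univ, Fintype.card_fin]

theorem lpOff_scale {c : ℝ} (hc : c ≠ 0) (j : Fin N) :
    lpOff (fun k => c * x k) i j = c⁻¹ * lpOff x i j := by
  have hcN : c ^ (N - 1) ≠ 0 := pow_ne_zero _ hc
  rw [lpOff, lpOff, prod_erase_sub_scale, prod_erase_sub_scale, ← mul_sub]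
  field_simp

variable {b b' : ℝ → ℝ} {σ σ' c lam : ℝ} {A A' : Fin N → ℝ} (β : Fin N → ℝ)

theorem ggDriftRHS_scale (hc : c ≠ 0) (hA : ∀ j, A' j = lam * A j)
    (hb : ∀ j, b' (c * x j) = b (x j)) (hσ : σ' ^ 2 = lam * c * σ ^ 2) :
    ggDriftRHS A' b' σ' (fun j => c * x j) β i = lam * ggDriftRHS A b σ x β i := by
  have hsum : ∑ j ∈ univ.erase i,
        β j * b' (c * x j) ^ 2 * (c * x j - c * x i) * lpOff (fun k => c * x k) i j ^ 2
      = c⁻¹ * ∑ j ∈ univ.erase i, β j * b (x j) ^ 2 * (x j - x i) * lpOff x i j ^ 2 := by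
    rw [Finset.mul_sum]
    refine sum_congr rfl fun j _ => ?_
    rw [hb, lpOff_scale x i hc, ← mul_sub]
    field_simp
  rw [ggDriftRHS, ggDriftRHS, hsum, hA, hb, hσ, lpDiag_scale]
  field_simp

theorem ggWeightRHS_scale (hc : c ≠ 0) (hA : ∀ j, A' j = lam * A j)
    (hb : ∀ j, b' (c * x j) = b (x j)) (hσ : σ' ^ 2 = lam * c * σ ^ 2) :
    ggWeightRHS A' b' σ' (fun j => c * x j) β i = lam * c⁻¹ * ggWeightRHS A b σ x β i := by
  have hsum : ∑ j ∈ univ.erase i, β j * b' (c * x j) ^ 2 * lpOff (fun k => c * x k) i j ^ 2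
      = c⁻¹ ^ 2 * ∑ j ∈ univ.erase i, β j * b (x j) ^ 2 * lpOff x i j ^ 2 := by
    rw [Finset.mul_sum]
    refine sum_congr rfl fun j _ => ?_
    rw [hb, lpOff_scale x i hc]
    ring
  rw [ggWeightRHS, ggWeightRHS, hsum, hA, hb, hσ, lpDiag_scale, lppDiag_scale]
  field_simp

end Scaling

theorem StationaryGGWithDrift.scale {N : ℕ} {x β A A' : Fin N → ℝ} {b b' : ℝ → ℝ}
    {σ σ' c lam : ℝ} (h : StationaryGGWithDrift A b σ x β) (hc : c ≠ 0)
    (hA : ∀ j, A' j = lam * A j) (hb : ∀ j, b' (c * x j) = b (x j))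
    (hσ : σ' ^ 2 = lam * c * σ ^ 2) :
    StationaryGGWithDrift A' b' σ' (fun j => c * x j) β := fun i =>
  ⟨by rw [ggDriftRHS_scale x i β hc hA hb hσ, ← (h i).1, mul_zero],
   by rw [ggWeightRHS_scale x i β hc hA hb hσ, ← (h i).2, mul_zero]⟩

theorem rpow_one_div_natCast_pow_mul {σ : ℝ} (hσ : 0 ≤ σ) {n : ℕ} (hn : n ≠ 0) (m : ℕ) :
    (σ ^ (1 / (n : ℝ))) ^ (n * m) = σ ^ m := by
  rw [pow_mul, one_div, Real.rpow_inv_natCast_pow hσ hn]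

theorem stationaryGG_scaling_general (k : ℝ) (n : ℕ) (hn : 1 ≤ n)
    (σ : ℝ) (hσ : 0 < σ) {N : ℕ} (x β : Fin N → ℝ)
    (hsol : StationaryGG (fun y => -k * y ^ (2 * n - 1)) (fun _ => 1) 1 x β) :
    StationaryGG (fun y => -k * y ^ (2 * n - 1)) (fun _ => 1) σ
      (fun i => σ ^ (1 / (n : ℝ)) * x i) β := by
  set c := σ ^ (1 / (n : ℝ))
  have hc : c ≠ 0 := (Real.rpow_pos_of_pos hσ _).ne'
  have hσ2 : σ ^ 2 = c ^ (2 * n - 1) * c * 1 ^ 2 := by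
    rw [one_pow, mul_one, ← pow_succ, Nat.sub_add_cancel (by omega), mul_comm,
      rpow_one_div_natCast_pow_mul hσ.le (by omega)]
  exact hsol.scale hc (fun j => by simp only [mul_pow]; ring) (fun _ => rfl) hσ2

/-- **Scaling of stationary Gauss–Galerkin solutions.**
For the drift `a(y) = −k y^{2n−1}` and unit diffusion, if `(x, β)` solves the stationary
Gauss–Galerkin equations with parameter `1`, then `(σ^{1/n} x, β)` solves them with
parameter `σ`. -/
theorem stationaryGG_scaling (k : ℝ) (hk : 0 < k) (n : ℕ) (hn : 1 ≤ n)
    (σ : ℝ) (hσ : 0 < σ) {N : ℕ} (hN : 1 ≤ N) (x β : Fin N → ℝ)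
    (hdist : ∀ i j : Fin N, i ≠ j → x i ≠ x j)
    (hsol : StationaryGG (fun y => -k * y ^ (2 * n - 1)) (fun _ => 1) 1 x β) :
    StationaryGG (fun y => -k * y ^ (2 * n - 1)) (fun _ => 1) σ
      (fun i => σ ^ (1 / (n : ℝ)) * x i) β :=
  stationaryGG_scaling_general k n hn σ hσ x β hsol
end

section
/- Let k > 0, θ ∈ ℝ, let n ≥ 1 and p ≥ 1 be integers, σ > 0 and N ≥ 1. Suppose (x, β) ∈ ℝ^N × ℝ^N has pairwise distinct nodes, satisfies the stationary Gauss–Galerkin equations with drift a(y) = −k y^{2n−1}, diffusion b ≡ 1 and parameter 1, and is symmetric: there is an involutive permutation r of {1,…,N} with x_{r(i)} = −x_i and β_{r(i)} = β_i for all i. Then the scaled pair (σ^{1/n} x, β) satisfies the stationary Gauss–Galerkin equations with diffusion b ≡ 1, parameter σ, and the McKean–Vlasov drift whose value at node i is A_i = −k (σ^{1/n} x_i)^{2n−1} + θ Σ_j β_j (σ^{1/n} x_j)^{2p+1}. -/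
open Finset

lemma lpDiag_smul {N : ℕ} (c : ℝ) (x : Fin N → ℝ) (i : Fin N) :
    lpDiag (fun l => c * x l) i = c⁻¹ * lpDiag x i := by
  unfold lpDiag
  rw [Finset.mul_sum]
  refine Finset.sum_congr rfl fun k hk => ?_
  rw [← mul_sub]
  simp [one_div, mul_inv, mul_comm]

lemma lppDiag_smul {N : ℕ} (c : ℝ) (x : Fin N → ℝ) (i : Fin N) :
    lppDiag (fun l => c * x l) i = c⁻¹ ^ 2 * lppDiag x i := by
  unfold lppDiag
  have h1 : ∑ k ∈ Finset.univ.erase i, 1 / (c * x i - c * x k)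
      = c⁻¹ * ∑ k ∈ Finset.univ.erase i, 1 / (x i - x k) := by
    rw [Finset.mul_sum]
    refine Finset.sum_congr rfl fun k hk => ?_
    rw [← mul_sub]; simp [one_div, mul_inv, mul_comm]
  have h2 : ∑ k ∈ Finset.univ.erase i, 1 / (c * x i - c * x k) ^ 2
      = c⁻¹ ^ 2 * ∑ k ∈ Finset.univ.erase i, 1 / (x i - x k) ^ 2 := by
    rw [Finset.mul_sum]
    refine Finset.sum_congr rfl fun k hk => ?_
    rw [← mul_sub, mul_pow]; simp [one_div, mul_inv, mul_comm]
  rw [h1, h2]; ring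

lemma lpOff_smul {N : ℕ} (c : ℝ) (hc : c ≠ 0) (x : Fin N → ℝ) (i j : Fin N)
    (hd : x j - x i ≠ 0) (hQ : ∏ k ∈ Finset.univ.erase i, (x i - x k) ≠ 0) :
    lpOff (fun l => c * x l) i j = c⁻¹ * lpOff x i j := by
  unfold lpOff
  have e1 : ∏ k ∈ Finset.univ.erase j, (c * x j - c * x k)
      = c ^ (Finset.univ.erase j).card * ∏ k ∈ Finset.univ.erase j, (x j - x k) := by
    simp_rw [← mul_sub]
    rw [Finset.prod_mul_distrib, Finset.prod_const]
  have e2 : ∏ k ∈ Finset.univ.erase i, (c * x i - c * x k)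
      = c ^ (Finset.univ.erase i).card * ∏ k ∈ Finset.univ.erase i, (x i - x k) := by
    simp_rw [← mul_sub]
    rw [Finset.prod_mul_distrib, Finset.prod_const]
  rw [e1, e2]
  have hcard : (Finset.univ.erase j).card = (Finset.univ.erase i).card := by
    rw [Finset.card_erase_of_mem (Finset.mem_univ _),
        Finset.card_erase_of_mem (Finset.mem_univ _)]
  rw [hcard, show c * x j - c * x i = c * (x j - x i) by ring]
  field_simp

/-- **Scaling of symmetric stationary Gauss–Galerkin solutions for McKean–Vlasov drifts.**
If `(x, β)` is a symmetric solution (under an involutive index reversal `r` with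
`x_{r(i)} = −x_i`, `β_{r(i)} = β_i`) of the stationary Gauss–Galerkin equations with drift
`a(y) = −k y^{2n−1}`, unit diffusion and parameter `1`, then the scaled pair
`(σ^{1/n} x, β)` satisfies the stationary Gauss–Galerkin equations with parameter `σ`,
unit diffusion, and the mean-field drift
`A_i = −k (σ^{1/n} x_i)^{2n−1} + θ ∑_j β_j (σ^{1/n} x_j)^{2p+1}`. -/
theorem stationaryGG_scaling_meanfield (k : ℝ) (hk : 0 < k) (θ : ℝ)
    (n p : ℕ) (hn : 1 ≤ n) (hp : 1 ≤ p) (σ : ℝ) (hσ : 0 < σ)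
    {N : ℕ} (hN : 1 ≤ N) (x β : Fin N → ℝ)
    (hdist : ∀ i j : Fin N, i ≠ j → x i ≠ x j)
    (hsol : StationaryGG (fun y => -k * y ^ (2 * n - 1)) (fun _ => 1) 1 x β)
    (r : Fin N → Fin N) (hr : ∀ i, r (r i) = i)
    (hxr : ∀ i, x (r i) = -x i) (hβr : ∀ i, β (r i) = β i) :
    StationaryGGWithDrift
      (fun i => -k * (σ ^ (1 / (n : ℝ)) * x i) ^ (2 * n - 1) +
        θ * ∑ j, β j * (σ ^ (1 / (n : ℝ)) * x j) ^ (2 * p + 1))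
      (fun _ => 1) σ (fun i => σ ^ (1 / (n : ℝ)) * x i) β := by
  set c : ℝ := σ ^ (1 / (n : ℝ)) with hcdef
  have hc : 0 < c := Real.rpow_pos_of_pos hσ _
  have hc0 : c ≠ 0 := hc.ne'
  have hn0 : (n : ℝ) ≠ 0 := Nat.cast_ne_zero.mpr (by omega)
  -- σ² = c^(2n) = c^(2n-1) * c
  have hkey : σ ^ 2 = c ^ (2 * n - 1) * c := by
    have h1 : c ^ (2 * n) = σ ^ 2 := by
      rw [hcdef, ← Real.rpow_natCast (σ ^ (1 / (n : ℝ))) (2 * n),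
        ← Real.rpow_mul hσ.le]
      rw [show 1 / (n : ℝ) * ((2 * n : ℕ) : ℝ) = 2 by push_cast; field_simp]
      rw [show (2 : ℝ) = ((2 : ℕ) : ℝ) by norm_num, Real.rpow_natCast]
    rw [← h1, ← pow_succ]
    congr 1
    omega
  -- the odd mean-field sum vanishes by symmetry
  have hsum : ∑ j, β j * (c * x j) ^ (2 * p + 1) = 0 := by
    have hodd : Odd (2 * p + 1) := ⟨p, by ring⟩
    have hbij : Function.Bijective r := (Function.Involutive.bijective hr)
    have h1 : ∑ j, β j * (c * x j) ^ (2 * p + 1)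
        = ∑ j, β (r j) * (c * x (r j)) ^ (2 * p + 1) :=
      (Function.Bijective.sum_comp hbij _).symm
    have h2 : ∀ j, β (r j) * (c * x (r j)) ^ (2 * p + 1)
        = -(β j * (c * x j) ^ (2 * p + 1)) := by
      intro j
      rw [hβr, hxr, show c * -x j = -(c * x j) by ring, hodd.neg_pow]
      ring
    rw [Finset.sum_congr rfl (fun j _ => h2 j), Finset.sum_neg_distrib] at h1
    linarith
  have hQ : ∀ i : Fin N, ∏ k ∈ Finset.univ.erase i, (x i - x k) ≠ 0 := by
    intro i
    refine Finset.prod_ne_zero_iff.mpr fun l hl => sub_ne_zero.mpr ?_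
    exact hdist i l (Finset.ne_of_mem_erase hl).symm
  intro i
  obtain ⟨h1, h2⟩ := hsol i
  simp only [ggDriftRHS, ggWeightRHS, one_pow, mul_one, one_mul] at h1 h2 ⊢
  have hOff : ∀ j ∈ Finset.univ.erase i,
      lpOff (fun l => c * x l) i j = c⁻¹ * lpOff x i j := by
    intro j hj
    exact lpOff_smul c hc0 x i j
      (sub_ne_zero.mpr (hdist j i (Finset.ne_of_mem_erase hj))) (hQ i)
  constructor
  · have hS : ∑ j ∈ Finset.univ.erase i,
        β j * (c * x j - c * x i) * lpOff (fun l => c * x l) i j ^ 2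
        = c⁻¹ * ∑ j ∈ Finset.univ.erase i, β j * (x j - x i) * lpOff x i j ^ 2 := by
      rw [Finset.mul_sum]
      refine Finset.sum_congr rfl fun j hj => ?_
      rw [hOff j hj]
      field_simp
    rw [hS, lpDiag_smul, hsum, mul_zero, add_zero, mul_pow, hkey]
    have h1' : 2 * β i * lpDiag x i + ∑ j ∈ Finset.univ.erase i,
        β j * (x j - x i) * lpOff x i j ^ 2 = k * β i * x i ^ (2 * n - 1) := by
      linarith [h1]
    have hinv : c * c⁻¹ = 1 := mul_inv_cancel₀ hc0
    linear_combination (-(c ^ (2 * n - 1) * c * c⁻¹)) * h1' +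
      (-(k * β i * c ^ (2 * n - 1) * x i ^ (2 * n - 1))) * hinv
  · have hS : ∑ j ∈ Finset.univ.erase i, β j * lpOff (fun l => c * x l) i j ^ 2
        = c⁻¹ ^ 2 * ∑ j ∈ Finset.univ.erase i, β j * lpOff x i j ^ 2 := by
      rw [Finset.mul_sum]
      refine Finset.sum_congr rfl fun j hj => ?_
      rw [hOff j hj]
      ring
    rw [hS, lpDiag_smul, lppDiag_smul, hsum, mul_zero, add_zero, mul_pow, hkey]
    have h2' : β i * (lpDiag x i ^ 2 + lppDiag x i) + ∑ j ∈ Finset.univ.erase i,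
        β j * lpOff x i j ^ 2 = 2 * k * β i * x i ^ (2 * n - 1) * lpDiag x i := by
      linarith [h2]
    have hinv : c * c⁻¹ = 1 := mul_inv_cancel₀ hc0
    linear_combination (-(c ^ (2 * n - 1) * c * c⁻¹ ^ 2)) * h2' +
      (-(2 * k * β i * x i ^ (2 * n - 1) * c ^ (2 * n - 1) * c⁻¹ * lpDiag x i)) * hinv
end

section
/- Let μ be a Borel probability measure on ℝ such that x ↦ x^{2k} is μ-integrable for every integer k ≥ 0 and such that Σ_{k≥1} (∫ x^{2k} dμ)/(2k)! < ∞. Then x ↦ |x|^k is μ-integrable for every integer k ≥ 1 and Σ_{k≥1} (∫ |x|^k dμ)/k! ≤ 3 · Σ_{k≥0} (∫ x^{2k} dμ)/(2k)! ; in particular the absolute moments of μ are factorial-summable. -/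
open MeasureTheory

/-- **Factorial-summability of even moments suffices.**
If a Borel probability measure `μ` on `ℝ` has all even moments finite and
`∑_{k≥1} (∫ x^{2k} dμ)/(2k)! < ∞`, then all absolute moments are finite and
`∑_{k≥1} (∫ |x|^k dμ)/k! ≤ 3 ∑_{k≥0} (∫ x^{2k} dμ)/(2k)!`; in particular the absolute
moments of `μ` are factorial-summable, i.e. `μ ∈ P_M(ℝ)`. -/
theorem even_moments_factorial_summable (μ : Measure ℝ) [IsProbabilityMeasure μ]
    (hint : ∀ k : ℕ, Integrable (fun x : ℝ => x ^ (2 * k)) μ)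
    (hsum : Summable (fun k : ℕ =>
      (∫ x, x ^ (2 * (k + 1)) ∂μ) / ((2 * (k + 1)).factorial : ℝ))) :
    (∀ k : ℕ, 1 ≤ k → Integrable (fun x : ℝ => |x| ^ k) μ) ∧
    Summable (fun k : ℕ => (∫ x, |x| ^ (k + 1) ∂μ) / ((k + 1).factorial : ℝ)) ∧
    ∑' k : ℕ, (∫ x, |x| ^ (k + 1) ∂μ) / ((k + 1).factorial : ℝ) ≤
      3 * ∑' k : ℕ, (∫ x, x ^ (2 * k) ∂μ) / ((2 * k).factorial : ℝ) := by
  classical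
  -- moments are nonnegative
  have hm_nonneg : ∀ j : ℕ, 0 ≤ ∫ x, x ^ (2 * j) ∂μ := by
    intro j
    refine integral_nonneg fun x => ?_
    rw [pow_mul]
    positivity
  -- absolute moments are integrable
  have habs : ∀ n : ℕ, Integrable (fun x : ℝ => |x| ^ n) μ := by
    intro n
    refine Integrable.mono' ((integrable_const (1 : ℝ)).add (hint n))
      ((continuous_abs.pow n).aestronglyMeasurable) (ae_of_all _ fun x => ?_)
    have h1 : ‖|x| ^ n‖ = |x| ^ n := by
      rw [Real.norm_eq_abs, abs_of_nonneg (by positivity)]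
    rw [h1]
    show |x| ^ n ≤ 1 + x ^ (2 * n)
    have h2 : x ^ (2 * n) = (|x| ^ n) ^ 2 := by
      rw [mul_comm 2 n, pow_mul, ← sq_abs (x ^ n), abs_pow]
    rw [h2]
    nlinarith [sq_nonneg (|x| ^ n - 1)]
  set u : ℕ → ℝ := fun k => (∫ x, x ^ (2 * k) ∂μ) / ((2 * k).factorial : ℝ) with hu
  set A : ℕ → ℝ := fun k => (∫ x, |x| ^ (k + 1) ∂μ) / ((k + 1).factorial : ℝ) with hA
  have hu_nonneg : ∀ j : ℕ, 0 ≤ u j := fun j =>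
    div_nonneg (hm_nonneg j) (by positivity)
  have hA_nonneg : ∀ k : ℕ, 0 ≤ A k := fun k =>
    div_nonneg (integral_nonneg fun x => by positivity) (by positivity)
  have hsum' : Summable (fun k : ℕ => u (k + 1)) := hsum
  have hsumu : Summable u := (summable_nat_add_iff 1).1 hsum'
  set S : ℝ := ∑' j, u j with hS
  have hS_nonneg : 0 ≤ S := tsum_nonneg hu_nonneg
  have htail : ∑' j, u (j + 1) ≤ S := by
    have h0 : S = u 0 + ∑' j, u (j + 1) := Summable.tsum_eq_zero_add hsumu
    have := hu_nonneg 0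
    linarith
  -- even terms of the series
  have heven : ∀ j : ℕ, A (2 * j + 1) = u (j + 1) := by
    intro j
    rw [hA, hu]
    simp only
    have h1 : 2 * j + 1 + 1 = 2 * (j + 1) := by ring
    rw [h1]
    congr 1
    simp only [pow_mul, sq_abs]
  -- odd terms of the series
  have hodd : ∀ j : ℕ, A (2 * j) ≤ u j + u (j + 1) / 2 := by
    intro j
    set t : ℝ := 2 * (j : ℝ) + 2 with ht_def
    have ht : (0 : ℝ) < t := by positivity
    have hptwise : ∀ x : ℝ, |x| ^ (2 * j + 1) ≤ (t * x ^ (2 * j) + x ^ (2 * (j + 1)) / t) / 2 := by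
      intro x
      have ha : (0 : ℝ) ≤ |x| ^ j := by positivity
      have hb : (0 : ℝ) ≤ |x| ^ (j + 1) := by positivity
      have h1 : x ^ (2 * j) = (|x| ^ j) ^ 2 := by
        rw [mul_comm 2 j, pow_mul, ← sq_abs (x ^ j), abs_pow]
      have h2 : x ^ (2 * (j + 1)) = (|x| ^ (j + 1)) ^ 2 := by
        rw [mul_comm 2 (j + 1), pow_mul, ← sq_abs (x ^ (j + 1)), abs_pow]
      have h3 : |x| ^ (2 * j + 1) = |x| ^ j * |x| ^ (j + 1) := by
        rw [← pow_add]
        congr 1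
        ring
      rw [h1, h2, h3]
      have h4 : (t * (|x| ^ j) ^ 2 + (|x| ^ (j + 1)) ^ 2 / t) / 2
          = (t * (t * (|x| ^ j) ^ 2) + (|x| ^ (j + 1)) ^ 2) / (2 * t) := by
        field_simp
      rw [h4, le_div_iff₀ (by positivity)]
      nlinarith [sq_nonneg (t * |x| ^ j - |x| ^ (j + 1))]
    have hInt2 : Integrable (fun x : ℝ => (t * x ^ (2 * j) + x ^ (2 * (j + 1)) / t) / 2) μ :=
      (((hint j).const_mul t).add ((hint (j + 1)).div_const t)).div_const 2
    have hI : ∫ x, |x| ^ (2 * j + 1) ∂μ ≤ ∫ x, (t * x ^ (2 * j) + x ^ (2 * (j + 1)) / t) / 2 ∂μ :=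
      integral_mono (habs _) hInt2 hptwise
    have hIval : ∫ x, (t * x ^ (2 * j) + x ^ (2 * (j + 1)) / t) / 2 ∂μ
        = (t * (∫ x, x ^ (2 * j) ∂μ) + (∫ x, x ^ (2 * (j + 1)) ∂μ) / t) / 2 := by
      rw [integral_div, integral_add ((hint j).const_mul t) ((hint (j + 1)).div_const t),
        integral_const_mul, integral_div]
    rw [hIval] at hI
    have hA2j : A (2 * j) = (∫ x, |x| ^ (2 * j + 1) ∂μ) / ((2 * j + 1).factorial : ℝ) := rfl
    rw [hA2j, hu]
    simp only
    set mj := ∫ x, x ^ (2 * j) ∂μ with hmj_def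
    set mj1 := ∫ x, x ^ (2 * (j + 1)) ∂μ with hmj1_def
    have hmj : 0 ≤ mj := hm_nonneg j
    have hmj1 : 0 ≤ mj1 := hm_nonneg (j + 1)
    have hf0 : (0 : ℝ) < ((2 * j).factorial : ℝ) := by
      exact_mod_cast Nat.factorial_pos _
    have hf1 : ((2 * j + 1).factorial : ℝ) = (2 * (j : ℝ) + 1) * ((2 * j).factorial : ℝ) := by
      rw [Nat.factorial_succ]
      push_cast
      ring
    have hf2 : ((2 * (j + 1)).factorial : ℝ) = (2 * (j : ℝ) + 2) * ((2 * (j : ℝ) + 1) * ((2 * j).factorial : ℝ)) := by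
      have h : 2 * (j + 1) = (2 * j + 1) + 1 := by ring
      rw [h, Nat.factorial_succ, ← hf1]
      push_cast
      ring
    have hf1pos : (0 : ℝ) < ((2 * j + 1).factorial : ℝ) := by
      exact_mod_cast Nat.factorial_pos _
    have step1 : (∫ x, |x| ^ (2 * j + 1) ∂μ) / ((2 * j + 1).factorial : ℝ)
        ≤ ((t * mj + mj1 / t) / 2) / ((2 * j + 1).factorial : ℝ) := by
      gcongr
    refine step1.trans ?_
    rw [hf1, hf2, ht_def]
    have hj : (0 : ℝ) ≤ (j : ℝ) := Nat.cast_nonneg j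
    have e1 : ((2 * (j : ℝ) + 2) * mj + mj1 / (2 * (j : ℝ) + 2)) / 2
          / ((2 * (j : ℝ) + 1) * ((2 * j).factorial : ℝ))
        = (2 * (j : ℝ) + 2) * mj / (2 * ((2 * (j : ℝ) + 1) * ((2 * j).factorial : ℝ)))
          + mj1 / ((2 * (j : ℝ) + 2) * ((2 * (j : ℝ) + 1) * ((2 * j).factorial : ℝ))) / 2 := by
      field_simp
    rw [e1]
    have e2 : (2 * (j : ℝ) + 2) * mj / (2 * ((2 * (j : ℝ) + 1) * ((2 * j).factorial : ℝ)))
        ≤ mj / ((2 * j).factorial : ℝ) := by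
      rw [div_le_div_iff₀ (by positivity) (by positivity)]
      nlinarith [mul_nonneg (mul_nonneg hmj hj) hf0.le]
    linarith
  -- pairing of terms
  have hpair : ∀ n : ℕ, ∑ k ∈ Finset.range (2 * n), A k
      = ∑ j ∈ Finset.range n, (A (2 * j) + A (2 * j + 1)) := by
    intro n
    induction n with
    | zero => simp
    | succ m ih =>
      rw [show 2 * (m + 1) = 2 * m + 1 + 1 from by ring, Finset.sum_range_succ,
        Finset.sum_range_succ, ih, Finset.sum_range_succ]
      ring
  -- partial sums of the absolute-moment series are bounded by 3S
  have hbound : ∀ n : ℕ, ∑ k ∈ Finset.range n, A k ≤ 3 * S := by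
    intro n
    have h1 : ∑ k ∈ Finset.range n, A k ≤ ∑ k ∈ Finset.range (2 * n), A k :=
      Finset.sum_le_sum_of_subset_of_nonneg (Finset.range_subset_range.mpr (by omega))
        (fun i _ _ => hA_nonneg i)
    have h2 := hpair n
    have h3 : ∑ j ∈ Finset.range n, (A (2 * j) + A (2 * j + 1))
        ≤ ∑ j ∈ Finset.range n, (u j + (3 / 2) * u (j + 1)) := by
      refine Finset.sum_le_sum fun j _ => ?_
      have h := hodd j
      have h' := heven j
      rw [h']
      linarith
    have h4 : ∑ j ∈ Finset.range n, (u j + (3 / 2) * u (j + 1))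
        = ∑ j ∈ Finset.range n, u j + (3 / 2) * ∑ j ∈ Finset.range n, u (j + 1) := by
      rw [Finset.sum_add_distrib, Finset.mul_sum]
    have h5 : ∑ j ∈ Finset.range n, u j ≤ S :=
      Summable.sum_le_tsum _ (fun i _ => hu_nonneg i) hsumu
    have h6 : ∑ j ∈ Finset.range n, u (j + 1) ≤ S :=
      le_trans (Summable.sum_le_tsum _ (fun i _ => hu_nonneg _) hsum') htail
    linarith
  refine ⟨fun k _ => habs k, ?_, ?_⟩
  · exact summable_of_sum_range_le hA_nonneg hbound
  · exact Summable.tsum_le_of_sum_range_le (summable_of_sum_range_le hA_nonneg hbound) hbound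
end

section
/- Let k ≥ 1 be an integer, σ > 0, θ ∈ ℝ, and let y* be the unique positive root of the quadratic equation σ²/2 + (1−θ)y − y² = 0. Suppose m : [0,∞) → [0,∞) is differentiable and satisfies, for all t ≥ 0, m'(t) ≤ 2k( (σ²/2)·m(t)^{1−1/k} + (1−θ)·m(t) − m(t)^{1+1/k} ). Then m(t) ≤ max( m(0), (y*)^k ) for all t ≥ 0. -/
lemma moment_rhs_neg (k : ℕ) (hk : 1 ≤ k) (σ θ : ℝ) (hσ : 0 < σ)
    (ystar : ℝ) (hy : 0 < ystar)
    (hroot : σ ^ 2 / 2 + (1 - θ) * ystar - ystar ^ 2 = 0)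
    (x : ℝ) (hx : ystar ^ k < x) :
    2 * k * (σ ^ 2 / 2 * x ^ (1 - 1 / (k : ℝ)) +
      (1 - θ) * x - x ^ (1 + 1 / (k : ℝ))) < 0 := by
  have hkR : (0:ℝ) < (k:ℝ) := by exact_mod_cast hk.trans_lt' (by norm_num)
  have hx0 : 0 < x := lt_trans (pow_pos hy k) hx
  set y : ℝ := x ^ (1 / (k : ℝ)) with hydef
  have hyx : ystar < y := by
    have h1 : (ystar ^ k : ℝ) ^ (1 / (k : ℝ)) < x ^ (1 / (k : ℝ)) :=
      Real.rpow_lt_rpow (pow_pos hy k).le hx (by positivity)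
    have h2 : (ystar ^ k : ℝ) ^ (1 / (k : ℝ)) = ystar := by
      rw [← Real.rpow_natCast ystar k, ← Real.rpow_mul hy.le]
      rw [mul_one_div, div_self (ne_of_gt hkR), Real.rpow_one]
    rwa [h2] at h1
  have hy0 : 0 < y := hy.trans hyx
  have e1 : x ^ (1 - 1 / (k : ℝ)) * y = x := by
    rw [hydef, ← Real.rpow_add hx0, show (1 - 1/(k:ℝ)) + 1/(k:ℝ) = 1 by ring,
      Real.rpow_one]
  have e2 : x ^ (1 - 1 / (k : ℝ)) * y ^ 2 = x ^ (1 + 1 / (k : ℝ)) := by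
    rw [hydef, sq, ← mul_assoc, ← Real.rpow_add hx0, ← Real.rpow_add hx0,
      show (1 - 1/(k:ℝ)) + 1/(k:ℝ) + 1/(k:ℝ) = 1 + 1/(k:ℝ) by ring]
  have hfac : σ ^ 2 / 2 * x ^ (1 - 1 / (k : ℝ)) + (1 - θ) * x - x ^ (1 + 1 / (k : ℝ))
      = x ^ (1 - 1 / (k : ℝ)) * (σ ^ 2 / 2 + (1 - θ) * y - y ^ 2) := by
    rw [mul_sub, mul_add]
    rw [← mul_assoc, mul_comm (x ^ (1 - 1 / (k : ℝ))) (1 - θ), mul_assoc, e1, e2]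
    ring
  have h1θ : 1 - θ < ystar := by nlinarith [mul_pos hσ hσ, hy]
  have hq : σ ^ 2 / 2 + (1 - θ) * y - y ^ 2 < 0 := by
    nlinarith [mul_pos (sub_pos.2 hyx) (show (0:ℝ) < y + ystar - (1 - θ) by linarith)]
  rw [hfac]
  have hxp : 0 < x ^ (1 - 1 / (k : ℝ)) := Real.rpow_pos_of_pos hx0 _
  have : x ^ (1 - 1 / (k : ℝ)) * (σ ^ 2 / 2 + (1 - θ) * y - y ^ 2) < 0 :=
    mul_neg_of_pos_of_neg hxp hq
  nlinarith [hkR]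

/-- **A priori bound from the moment differential inequality.**
Let `y*` be the unique positive root of `σ²/2 + (1−θ)y − y² = 0`. If
`m : [0,∞) → [0,∞)` is differentiable and satisfies
`m' ≤ 2k((σ²/2) m^{1−1/k} + (1−θ) m − m^{1+1/k})`, then
`m(t) ≤ max(m(0), (y*)^k)` for all `t ≥ 0`. (Powers of `m` are real powers.) -/
theorem moment_ode_bound (k : ℕ) (hk : 1 ≤ k) (σ θ : ℝ) (hσ : 0 < σ)
    (ystar : ℝ) (hy : 0 < ystar)
    (hroot : σ ^ 2 / 2 + (1 - θ) * ystar - ystar ^ 2 = 0)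
    (huniq : ∀ y : ℝ, 0 < y → σ ^ 2 / 2 + (1 - θ) * y - y ^ 2 = 0 → y = ystar)
    (m m' : ℝ → ℝ)
    (hnonneg : ∀ t : ℝ, 0 ≤ t → 0 ≤ m t)
    (hderiv : ∀ t : ℝ, 0 ≤ t → HasDerivAt m (m' t) t)
    (hineq : ∀ t : ℝ, 0 ≤ t →
      m' t ≤ 2 * k * (σ ^ 2 / 2 * m t ^ (1 - 1 / (k : ℝ)) +
        (1 - θ) * m t - m t ^ (1 + 1 / (k : ℝ)))) :
    ∀ t : ℝ, 0 ≤ t → m t ≤ max (m 0) (ystar ^ k) := by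
  intro t₀ ht₀
  by_contra hcon
  push_neg at hcon
  set M := max (m 0) (ystar ^ k) with hMdef
  have hMy : ystar ^ k ≤ M := le_max_right _ _
  have hcont : ContinuousOn m (Set.Icc 0 t₀) := fun t ht =>
    ((hderiv t ht.1).continuousAt).continuousWithinAt
  set S : Set ℝ := Set.Icc 0 t₀ ∩ m ⁻¹' Set.Iic M with hSdef
  have hS0 : (0:ℝ) ∈ S := ⟨⟨le_refl _, ht₀⟩, Set.mem_preimage.2 (Set.mem_Iic.2 (le_max_left _ _))⟩
  have hScl : IsClosed S :=
    hcont.preimage_isClosed_of_isClosed isClosed_Icc isClosed_Iic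
  have hScomp : IsCompact S :=
    isCompact_Icc.of_isClosed_subset hScl Set.inter_subset_left
  set T : ℝ := sSup S with hTdef
  have hTS : T ∈ S := hScomp.sSup_mem ⟨0, hS0⟩
  have hT0 : 0 ≤ T := hTS.1.1
  have hTt : T ≤ t₀ := hTS.1.2
  have hmT : m T ≤ M := hTS.2
  have ht₀S : t₀ ∉ S := fun h => absurd h.2 (not_le.2 hcon)
  have hTlt : T < t₀ := lt_of_le_of_ne hTt (fun h => ht₀S (h ▸ hTS))
  have hbdd : BddAbove S := ⟨t₀, fun x hx => hx.1.2⟩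
  have habove : ∀ t ∈ Set.Ioc T t₀, M < m t := by
    intro t ht
    by_contra hle
    push_neg at hle
    have : t ∈ S := ⟨⟨hT0.trans ht.1.le, ht.2⟩, hle⟩
    exact absurd (le_csSup hbdd this) (not_le.2 ht.1)
  have hanti : StrictAntiOn m (Set.Icc T t₀) := by
    apply strictAntiOn_of_deriv_neg (convex_Icc T t₀)
    · exact hcont.mono (Set.Icc_subset_Icc hT0 le_rfl)
    · intro t ht
      rw [interior_Icc] at ht
      have ht0 : 0 ≤ t := hT0.trans ht.1.le
      rw [(hderiv t ht0).deriv]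
      have hgt : ystar ^ k < m t := hMy.trans_lt (habove t ⟨ht.1, ht.2.le⟩)
      exact lt_of_le_of_lt (hineq t ht0)
        (moment_rhs_neg k hk σ θ hσ ystar hy hroot (m t) hgt)
  have : m t₀ < m T :=
    hanti ⟨le_rfl, hTt⟩ ⟨hTt, le_rfl⟩ hTlt
  exact absurd (this.trans_le hmT) (not_lt.2 hcon.le)
end

section
/- Let σ > 0 and θ ∈ ℝ, and for each integer k ≥ 1 let m_{2k} : [0,∞) → [0,∞) be differentiable and satisfy, for all t ≥ 0, m_{2k}'(t) ≤ 2k( (σ²/2)·m_{2k}(t)^{1−1/k} + (1−θ)·m_{2k}(t) − m_{2k}(t)^{1+1/k} ). If Σ_{k≥1} m_{2k}(0)/(2k)! < ∞, then sup_{t≥0} Σ_{k≥1} m_{2k}(t)/(2k)! < ∞; indeed m_{2k}(t) ≤ max( m_{2k}(0), (y*)^k ) for all t and k, where y* is the unique positive root of σ²/2 + (1−θ)y − y² = 0, and Σ_{k≥1} (y*)^k/(2k)! < ∞. -/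
-- invariance lemma
lemma inv_lemma {f f' : ℝ → ℝ} {B : ℝ}
    (hf : ∀ t : ℝ, 0 ≤ t → HasDerivAt f (f' t) t)
    (hneg : ∀ t : ℝ, 0 ≤ t → max (f 0) B < f t → f' t < 0) :
    ∀ t : ℝ, 0 ≤ t → f t ≤ max (f 0) B := by
  intro t ht
  by_contra hlt
  push_neg at hlt
  set M := max (f 0) B with hM
  have ht0 : 0 < t := by
    rcases ht.lt_or_eq with h | h
    · exact h
    · exfalso; rw [← h] at hlt; exact absurd hlt (not_lt.2 (le_max_left _ _))
  set S : Set ℝ := {u | u ∈ Set.Icc 0 t ∧ f u ≤ M} with hS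
  have h0S : (0:ℝ) ∈ S := ⟨⟨le_rfl, ht⟩, le_max_left _ _⟩
  have hbdd : BddAbove S := ⟨t, fun u hu => hu.1.2⟩
  set s := sSup S with hs
  have hs0 : 0 ≤ s := le_csSup hbdd h0S
  have hst : s ≤ t := csSup_le ⟨0, h0S⟩ (fun u hu => hu.1.2)
  have hsmem : s ∈ closure S := csSup_mem_closure ⟨0, h0S⟩ hbdd
  have hfs : f s ≤ M := by
    have hc : ContinuousWithinAt f S s := (hf s hs0).continuousAt.continuousWithinAt
    have hne : (nhdsWithin s S).NeBot := mem_closure_iff_nhdsWithin_neBot.1 hsmem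
    refine le_of_tendsto hc ?_
    filter_upwards [self_mem_nhdsWithin] with u hu using hu.2
  have hslt : s < t := by
    rcases hst.lt_or_eq with h | h
    · exact h
    · exfalso; rw [h] at hfs; linarith
  have hgt : ∀ u ∈ Set.Ioc s t, M < f u := by
    intro u hu
    by_contra h
    push_neg at h
    have : u ∈ S := ⟨⟨hs0.trans hu.1.le, hu.2⟩, h⟩
    exact absurd (le_csSup hbdd this) (not_le.2 hu.1)
  have hanti : StrictAntiOn f (Set.Icc s t) := by
    apply strictAntiOn_of_deriv_neg (convex_Icc s t)
    · intro x hx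
      exact ((hf x (hs0.trans hx.1)).continuousAt).continuousWithinAt
    · intro x hx
      rw [interior_Icc] at hx
      rw [(hf x (hs0.trans hx.1.le)).deriv]
      exact hneg x (hs0.trans hx.1.le) (hgt x ⟨hx.1, hx.2.le⟩)
  have := hanti ⟨le_rfl, hslt.le⟩ ⟨hslt.le, le_rfl⟩ hslt
  linarith

lemma keyE {σ θ ystar : ℝ} (hy : 0 < ystar)
    (hroot : σ ^ 2 / 2 + (1 - θ) * ystar - ystar ^ 2 = 0)
    {k : ℕ} (hk : 1 ≤ k) {x : ℝ} (hx : ystar ^ k < x) :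
    σ ^ 2 / 2 * x ^ (1 - 1 / (k : ℝ)) + (1 - θ) * x - x ^ (1 + 1 / (k : ℝ)) < 0 := by
  have hk0 : (0:ℝ) < k := by exact_mod_cast hk
  have hxpos : 0 < x := lt_trans (pow_pos hy k) hx
  set y := x ^ ((k:ℝ)⁻¹) with hydef
  have hy_gt : ystar < y := by
    have h1 : (ystar ^ k) ^ ((k:ℝ)⁻¹) = ystar :=
      Real.pow_rpow_inv_natCast hy.le (by omega)
    calc ystar = (ystar ^ k) ^ ((k:ℝ)⁻¹) := h1.symm
      _ < y := Real.rpow_lt_rpow (pow_pos hy k).le hx (by positivity)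
  have hypos : 0 < y := hy.trans hy_gt
  have hxy : x ^ (1 - 1 / (k:ℝ)) * y = x := by
    rw [hydef, ← Real.rpow_add hxpos]
    rw [one_div]
    ring_nf
    exact Real.rpow_one x
  have hxy2 : x ^ (1 - 1 / (k:ℝ)) * y ^ 2 = x ^ (1 + 1 / (k:ℝ)) := by
    have h2 : x ^ (1 - 1 / (k:ℝ)) * y ^ 2 = x * y := by
      rw [sq, ← mul_assoc, hxy]
    rw [h2, hydef]
    nth_rewrite 1 [← Real.rpow_one x]
    rw [← Real.rpow_add hxpos, one_div]
  have hφ : σ ^ 2 / 2 + (1 - θ) * y - y ^ 2 < 0 := by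
    have key : ystar * (σ ^ 2 / 2 + (1 - θ) * y - y ^ 2)
        = (ystar - y) * (σ ^ 2 / 2 + ystar * y) := by
      linear_combination y * hroot
    nlinarith [mul_pos hy hypos, sq_nonneg σ, mul_pos hy (sub_pos.2 hy_gt)]
  have hrw : σ ^ 2 / 2 * x ^ (1 - 1 / (k:ℝ)) + (1 - θ) * x - x ^ (1 + 1 / (k:ℝ))
      = x ^ (1 - 1 / (k:ℝ)) * (σ ^ 2 / 2 + (1 - θ) * y - y ^ 2) := by
    rw [mul_sub, mul_add, hxy2, ← mul_assoc, mul_comm (x ^ (1 - 1 / (k:ℝ))) (1 - θ),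
      mul_assoc, hxy]
    ring
  rw [hrw]
  exact mul_neg_of_pos_of_neg (Real.rpow_pos_of_pos hxpos _) hφ

/-- **Uniform-in-time factorial summability of even moments.**
Suppose each (even) moment function `m_k` (`k ≥ 1`, representing `m_{2k}`) is
nonnegative, differentiable, and satisfies the differential inequality
`m_k' ≤ 2k((σ²/2) m_k^{1−1/k} + (1−θ) m_k − m_k^{1+1/k})` on `[0, ∞)`. If
`∑_{k≥1} m_k(0)/(2k)! < ∞`, then `m_k(t) ≤ max(m_k(0), (y*)^k)` for all `t, k`, where
`y*` is the unique positive root of `σ²/2 + (1−θ)y − y² = 0`, the series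
`∑_{k≥1} (y*)^k/(2k)!` converges, and `sup_{t ≥ 0} ∑_{k≥1} m_k(t)/(2k)! < ∞`. -/
theorem moments_uniformly_factorial_summable (σ θ : ℝ) (hσ : 0 < σ)
    (m m' : ℕ → ℝ → ℝ)
    (hnonneg : ∀ k : ℕ, 1 ≤ k → ∀ t : ℝ, 0 ≤ t → 0 ≤ m k t)
    (hderiv : ∀ k : ℕ, 1 ≤ k → ∀ t : ℝ, 0 ≤ t → HasDerivAt (m k) (m' k t) t)
    (hineq : ∀ k : ℕ, 1 ≤ k → ∀ t : ℝ, 0 ≤ t →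
      m' k t ≤ 2 * k * (σ ^ 2 / 2 * m k t ^ (1 - 1 / (k : ℝ)) +
        (1 - θ) * m k t - m k t ^ (1 + 1 / (k : ℝ))))
    (hsum0 : Summable (fun k : ℕ => m (k + 1) 0 / ((2 * (k + 1)).factorial : ℝ)))
    (ystar : ℝ) (hy : 0 < ystar)
    (hroot : σ ^ 2 / 2 + (1 - θ) * ystar - ystar ^ 2 = 0)
    (huniq : ∀ y : ℝ, 0 < y → σ ^ 2 / 2 + (1 - θ) * y - y ^ 2 = 0 → y = ystar) :
    (∀ k : ℕ, 1 ≤ k → ∀ t : ℝ, 0 ≤ t → m k t ≤ max (m k 0) (ystar ^ k)) ∧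
    Summable (fun k : ℕ => ystar ^ (k + 1) / ((2 * (k + 1)).factorial : ℝ)) ∧
    (∀ t : ℝ, 0 ≤ t →
      Summable (fun k : ℕ => m (k + 1) t / ((2 * (k + 1)).factorial : ℝ))) ∧
    ∃ C : ℝ, ∀ t : ℝ, 0 ≤ t →
      ∑' k : ℕ, m (k + 1) t / ((2 * (k + 1)).factorial : ℝ) ≤ C := by
  have hbound : ∀ k : ℕ, 1 ≤ k → ∀ t : ℝ, 0 ≤ t → m k t ≤ max (m k 0) (ystar ^ k) := by
    intro k hk
    apply inv_lemma (hderiv k hk)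
    intro t ht hgt
    have hk1 : (1:ℝ) ≤ k := by exact_mod_cast hk
    have hE := keyE hy hroot hk ((le_max_right _ _).trans_lt hgt)
    refine lt_of_le_of_lt (hineq k hk t ht) (mul_neg_of_pos_of_neg (by linarith) hE)
  -- summability of ystar series
  have hys : Summable (fun k : ℕ => ystar ^ (k + 1) / ((2 * (k + 1)).factorial : ℝ)) := by
    have h1 : Summable (fun k : ℕ => ystar ^ (k + 1) / ((k + 1).factorial : ℝ)) :=
      (summable_nat_add_iff 1).2 (Real.summable_pow_div_factorial ystar)
    refine Summable.of_nonneg_of_le (fun k => by positivity) (fun k => ?_) h1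
    have hfac : ((k + 1).factorial : ℝ) ≤ ((2 * (k + 1)).factorial : ℝ) := by
      exact_mod_cast Nat.factorial_le (by omega)
    exact div_le_div_of_nonneg_left (by positivity) (by positivity) hfac
  -- bound function
  set b : ℕ → ℝ := fun k => m (k + 1) 0 / ((2 * (k + 1)).factorial : ℝ) +
      ystar ^ (k + 1) / ((2 * (k + 1)).factorial : ℝ) with hb
  have hbs : Summable b := hsum0.add hys
  have hle : ∀ t : ℝ, 0 ≤ t → ∀ k : ℕ,
      m (k + 1) t / ((2 * (k + 1)).factorial : ℝ) ≤ b k := by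
    intro t ht k
    have h1 := hbound (k + 1) (by omega) t ht
    have h2 : max (m (k + 1) 0) (ystar ^ (k + 1)) ≤ m (k + 1) 0 + ystar ^ (k + 1) :=
      max_le (le_add_of_nonneg_right (by positivity))
        (le_add_of_nonneg_left (hnonneg (k + 1) (by omega) 0 le_rfl))
    have hf : (0:ℝ) < ((2 * (k + 1)).factorial : ℝ) := by positivity
    have h3 : m (k + 1) t / ((2 * (k + 1)).factorial : ℝ) ≤
        (m (k + 1) 0 + ystar ^ (k + 1)) / ((2 * (k + 1)).factorial : ℝ) := by
      gcongr
      exact h1.trans h2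
    simpa [hb, add_div] using h3
  have hsumt : ∀ t : ℝ, 0 ≤ t →
      Summable (fun k : ℕ => m (k + 1) t / ((2 * (k + 1)).factorial : ℝ)) := by
    intro t ht
    refine Summable.of_nonneg_of_le (fun k => ?_) (hle t ht) hbs
    exact div_nonneg (hnonneg (k + 1) (by omega) t ht) (by positivity)
  refine ⟨hbound, hys, hsumt, ∑' k, b k, fun t ht => ?_⟩
  exact Summable.tsum_le_tsum (hle t ht) (hsumt t ht) hbs
end
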